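/- arXiv:2101.09364 — 9 statements merged into one kernel-verified Lean document; each statement's English description precedes it below -/
import Mathlib

section
/- The number of labeled rooted trees on a vertex set with n ≥ 1 elements is n^(n-1). -/
/-- A labeled rooted tree on the vertex set `Fin n`, encoded as a pair `(r, p)` of a root `r`
and a parent function `p` (extended to fix the root).  The condition that `Fin n \ {r}` has no
nonempty `p`-invariant subset is equivalent to: every vertex reaches the root by iterating `p`. -/
def IsRTree (n : ℕ) (rp : Fin n × (Fin n → Fin n)) : Prop :=
  rp.2 rp.1 = rp.1 ∧ ∀ j : Fin n, ∃ k : ℕ, rp.2^[k] j = rp.1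

/-!
Joyal's bijective proof. Self-maps of `α` and trees with a marked vertex both decompose over
rooted forests on `α`. A map `f` amounts to the forest obtained by cutting `f` at its periodic
points, together with the permutation that `f` induces on them. A tree with marked vertex `v`
amounts to the forest obtained by cutting the path from `v` to the root, together with the order
of the vertices along that path. Over a forest with root set `M` both fibres are thus in bijection
with `Fin #M ≃ M`, so `n ^ n = n * #trees`.
-/

open Function Set

variable {α : Type*}

namespace Function

theorem iterate_mem_of_eqOn_compl {f g : α → α} {M : Set α} (hg : MapsTo g M M)
    (hfg : EqOn f g Mᶜ) {k : ℕ} {x : α} (h : f^[k] x ∈ M) : g^[k] x ∈ M := by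
  induction k generalizing x with
  | zero => exact h
  | succ k ih =>
    rw [iterate_succ_apply] at h ⊢
    by_cases hx : x ∈ M
    · exact hg.iterate k (hg hx)
    · rw [← hfg hx]
      exact ih h

theorem exists_iterate_mem_periodicPts [Finite α] (f : α → α) (x : α) :
    ∃ k, f^[k] x ∈ periodicPts f := by
  obtain ⟨i, j, hij, h⟩ := Finite.exists_ne_map_eq_of_infinite (f^[·] x)
  wlog hlt : i < j generalizing i j
  · exact this j i hij.symm h.symm (hij.lt_or_gt.resolve_left hlt)
  refine ⟨i, mk_mem_periodicPts (n := j - i) (by omega) ?_⟩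
  rw [IsPeriodicPt, IsFixedPt, ← iterate_add_apply, Nat.sub_add_cancel hlt.le]
  exact h.symm

theorem mem_of_mem_periodicPts {f : α → α} {M : Set α} (hM : MapsTo f M M) {x : α}
    (hx : x ∈ periodicPts f) {k : ℕ} (hk : f^[k] x ∈ M) : x ∈ M := by
  obtain ⟨n, hn, hper⟩ := hx
  rw [← (hper.mul_const k).eq, ← Nat.sub_add_cancel (Nat.le_mul_of_pos_left k hn),
    iterate_add_apply]
  exact hM.iterate _ hk

theorem injOn_iterate_Iic_find [DecidableEq α] {f : α → α} {x r : α} (h : ∃ k, f^[k] x = r) :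
    InjOn (f^[·] x) (Iic (Nat.find h)) := by
  intro i hi j hj hij
  simp only [mem_Iic] at hi hj hij
  by_contra hne
  wlog hlt : i < j generalizing i j
  · exact this hij.symm hj hi (Ne.symm hne) (by omega)
  have hshort : f^[Nat.find h - j + i] x = r := by
    rw [iterate_add_apply, hij, ← iterate_add_apply, Nat.sub_add_cancel hj]
    exact Nat.find_spec h
  exact Nat.find_min h (by omega) hshort

end Function

theorem Fin.val_orderSucc {m : ℕ} (i : Fin m) :
    ((Order.succ i : Fin m) : ℕ) = min ((i : ℕ) + 1) (m - 1) := by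
  cases m with
  | zero => exact i.elim0
  | succ k =>
    induction i using Fin.lastCases with
    | last => simp
    | cast j => simp

def IsRootedTree (r : α) (p : α → α) : Prop :=
  p r = r ∧ ∀ x, ∃ k, p^[k] x = r

abbrev LabeledRootedTree (α : Type*) := {rp : α × (α → α) // IsRootedTree rp.1 rp.2}

namespace LabeledRootedTree

variable [DecidableEq α] (T : LabeledRootedTree α)

abbrev root : α := T.1.1

abbrev parent : α → α := T.1.2

def depth (v : α) : ℕ := Nat.find (T.2.2 v)

theorem iterate_depth (v : α) : T.parent^[T.depth v] v = T.root := Nat.find_spec (T.2.2 v)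

theorem iterate_eq_root {v : α} {i : ℕ} (hi : T.depth v ≤ i) : T.parent^[i] v = T.root := by
  rw [← Nat.sub_add_cancel hi, iterate_add_apply, iterate_depth]
  exact iterate_fixed T.2.1 _

def pathToRoot (v : α) : Finset α := (Finset.range (T.depth v + 1)).image (T.parent^[·] v)

theorem mem_pathToRoot {v x : α} : x ∈ T.pathToRoot v ↔ ∃ i ≤ T.depth v, T.parent^[i] v = x := by
  simp [pathToRoot]

theorem injOn_iterate_Iic_depth (v : α) : InjOn (T.parent^[·] v) (Iic (T.depth v)) :=
  injOn_iterate_Iic_find (T.2.2 v)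

theorem card_pathToRoot (v : α) : (T.pathToRoot v).card = T.depth v + 1 := by
  rw [pathToRoot, Finset.card_image_of_injOn, Finset.card_range]
  intro i hi j hj
  simp only [Finset.coe_range, mem_Iio, Nat.lt_succ_iff] at hi hj
  exact T.injOn_iterate_Iic_depth v hi hj

theorem root_mem_pathToRoot (v : α) : T.root ∈ T.pathToRoot v :=
  T.mem_pathToRoot.mpr ⟨_, le_rfl, T.iterate_depth v⟩

theorem iterate_min_depth (v : α) (i : ℕ) :
    T.parent^[min i (T.depth v)] v = T.parent^[i] v := by
  rcases le_total i (T.depth v) with h | h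
  · rw [min_eq_left h]
  · rw [min_eq_right h, T.iterate_eq_root h, T.iterate_depth]

end LabeledRootedTree

@[ext]
structure RootedForest (α : Type*) where
  roots : Finset α
  parent : α → α
  parent_eq_self : ∀ x ∈ roots, parent x = x
  exists_iterate_mem : ∀ x, ∃ k, parent^[k] x ∈ roots

namespace RootedForest

theorem roots_nonempty [Nonempty α] (F : RootedForest α) : F.roots.Nonempty :=
  have ⟨x⟩ := ‹Nonempty α›
  have ⟨_, hk⟩ := F.exists_iterate_mem x
  ⟨_, hk⟩

variable [DecidableEq α]

def cut (f : α → α) (M : Finset α) (hM : ∀ x, ∃ k, f^[k] x ∈ M) : RootedForest α where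
  roots := M
  parent x := if x ∈ M then x else f x
  parent_eq_self _ hx := if_pos hx
  exists_iterate_mem x := (hM x).imp fun _ hk =>
    iterate_mem_of_eqOn_compl (fun y hy => by simp [hy]) (fun y hy => (if_neg hy).symm) hk

def glue (F : RootedForest α) (g : F.roots → F.roots) (x : α) : α :=
  if h : x ∈ F.roots then g ⟨x, h⟩ else F.parent x

section

variable (F : RootedForest α) (g : F.roots → F.roots)

theorem glue_of_mem {x : α} (hx : x ∈ F.roots) : F.glue g x = g ⟨x, hx⟩ := dif_pos hx

theorem glue_of_notMem {x : α} (hx : x ∉ F.roots) : F.glue g x = F.parent x := dif_neg hx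

theorem mapsTo_glue : MapsTo (F.glue g) F.roots F.roots := fun x hx => by
  rw [Finset.mem_coe, glue_of_mem F g hx]
  exact (g _).2

theorem semiconj_glue : Semiconj (↑) g (F.glue g) := fun x => (glue_of_mem F g x.2).symm

theorem exists_iterate_glue_mem (x : α) : ∃ k, (F.glue g)^[k] x ∈ F.roots :=
  (F.exists_iterate_mem x).imp fun _ hk =>
    iterate_mem_of_eqOn_compl (mapsTo_glue F g) (fun _ hy => (glue_of_notMem F g hy).symm) hk

theorem cut_glue {M : Finset α} (hM : ∀ x, ∃ k, (F.glue g)^[k] x ∈ M) (h : M = F.roots) :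
    cut (F.glue g) M hM = F := by
  subst h
  ext x
  · rfl
  · by_cases hx : x ∈ F.roots
    · simp [cut, hx, F.parent_eq_self x hx]
    · simp [cut, hx, glue_of_notMem F g hx]

end

theorem glue_cut {f : α → α} {M : Finset α} (hM : ∀ x, ∃ k, f^[k] x ∈ M)
    (g : M → M) (hg : ∀ x, (g x : α) = f x) : (cut f M hM).glue g = f := by
  funext x
  by_cases hx : x ∈ M
  · exact (glue_of_mem (cut f M hM) g hx).trans (hg ⟨x, hx⟩)
  · exact (glue_of_notMem (cut f M hM) g hx).trans (if_neg hx)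

section

variable [Finite α]

noncomputable def core (f : α → α) : RootedForest α :=
  cut f (toFinite (periodicPts f)).toFinset fun x => by
    simpa using exists_iterate_mem_periodicPts f x

theorem coe_roots_core (f : α → α) : ((core f).roots : Set α) = periodicPts f :=
  Finite.coe_toFinset _

theorem periodicPts_glue_perm (F : RootedForest α) (σ : Equiv.Perm F.roots) :
    periodicPts (F.glue (σ ·)) = F.roots := by
  refine Subset.antisymm (fun x hx => ?_) (fun x hx => ?_)
  · obtain ⟨k, hk⟩ := F.exists_iterate_glue_mem (σ ·) x
    exact mem_of_mem_periodicPts (F.mapsTo_glue _) hx hk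
  · exact (F.semiconj_glue (σ ·)).mapsTo_periodicPts (σ.injective.mem_periodicPts ⟨x, hx⟩)

theorem core_glue_perm (F : RootedForest α) (σ : Equiv.Perm F.roots) :
    core (F.glue (σ ·)) = F :=
  cut_glue F _ _ (Finset.coe_injective (by simp [periodicPts_glue_perm]))

noncomputable def coreFiberEquivPerm (F : RootedForest α) :
    {f : α → α // core f = F} ≃ Equiv.Perm F.roots where
  toFun f := BijOn.equiv f.1 <| by
    obtain ⟨f, rfl⟩ := f
    rw [coe_roots_core]
    exact bijOn_periodicPts f
  invFun σ := ⟨F.glue (σ ·), core_glue_perm F σ⟩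
  left_inv := by
    rintro ⟨f, rfl⟩
    exact Subtype.ext (glue_cut _ _ fun _ => rfl)
  right_inv σ := Equiv.ext fun x => Subtype.ext (F.glue_of_mem _ x.2)

end

def spine (x : α × LabeledRootedTree α) : RootedForest α :=
  cut x.2.parent (x.2.pathToRoot x.1) fun y =>
    ⟨x.2.depth y, by rw [x.2.iterate_depth]; exact x.2.root_mem_pathToRoot x.1⟩

theorem card_roots_spine (x : α × LabeledRootedTree α) :
    (spine x).roots.card = x.2.depth x.1 + 1 :=
  x.2.card_pathToRoot x.1

theorem iterate_mem_roots_spine (x : α × LabeledRootedTree α) {i : ℕ}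
    (hi : i < (spine x).roots.card) : x.2.parent^[i] x.1 ∈ (spine x).roots :=
  x.2.mem_pathToRoot.mpr ⟨i, by rw [card_roots_spine] at hi; omega, rfl⟩

theorem bijective_iterate_spine (x : α × LabeledRootedTree α) :
    Bijective fun i : Fin (spine x).roots.card =>
      (⟨x.2.parent^[i] x.1, iterate_mem_roots_spine x i.2⟩ : (spine x).roots) := by
  rw [Fintype.bijective_iff_injective_and_card, Fintype.card_fin, Fintype.card_coe]
  refine ⟨fun i j hij => ?_, rfl⟩
  have := card_roots_spine x
  have := i.2
  have := j.2
  exact Fin.ext (x.2.injOn_iterate_Iic_depth x.1 (mem_Iic.mpr (by omega)) (mem_Iic.mpr (by omega))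
    (congrArg Subtype.val hij))

noncomputable def spineOrdering (x : α × LabeledRootedTree α) :
    Fin (spine x).roots.card ≃ (spine x).roots :=
  Equiv.ofBijective _ (bijective_iterate_spine x)

section

variable (F : RootedForest α) (e : Fin F.roots.card ≃ F.roots)

/-- Chains the roots into the path `e 0 → e 1 → ⋯`; since `Order.succ` on `Fin` saturates, the
last one becomes the root. -/
def spineMap : α → α := F.glue fun y => e (Order.succ (e.symm y))

theorem spineMap_apply (i : Fin F.roots.card) : F.spineMap e (e i) = e (Order.succ i) := by
  simp [spineMap, glue_of_mem _ _ (e i).2]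

theorem iterate_spineMap (hm : 0 < F.roots.card) (i : ℕ) :
    (F.spineMap e)^[i] (e ⟨0, hm⟩) = e ⟨min i (F.roots.card - 1), by omega⟩ := by
  induction i with
  | zero => simp
  | succ i ih =>
    rw [iterate_succ_apply', ih, spineMap_apply]
    congr 2
    ext
    simp only [Fin.val_orderSucc]
    omega

theorem isRootedTree_spineMap (hm : 0 < F.roots.card) :
    IsRootedTree (e ⟨F.roots.card - 1, by omega⟩ : α) (F.spineMap e) := by
  refine ⟨?_, fun x => ?_⟩
  · rw [spineMap_apply]
    congr 2
    ext
    simp only [Fin.val_orderSucc]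
    omega
  · obtain ⟨k, hk⟩ : ∃ k, (F.spineMap e)^[k] x ∈ F.roots := F.exists_iterate_glue_mem _ x
    set j := e.symm ⟨_, hk⟩
    have hj : (F.spineMap e)^[k] x = (F.spineMap e)^[j] (e ⟨0, hm⟩) := by
      rw [iterate_spineMap, show (F.spineMap e)^[k] x = e j by simp [j]]
      congr 2
      ext
      simp only
      omega
    refine ⟨F.roots.card - 1 + k, ?_⟩
    rw [iterate_add_apply, hj, ← iterate_add_apply, iterate_spineMap]
    simp

variable (hm : 0 < F.roots.card)

def spineTree : α × LabeledRootedTree α :=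
  (e ⟨0, hm⟩, ⟨(e ⟨F.roots.card - 1, by omega⟩, F.spineMap e), F.isRootedTree_spineMap e hm⟩)

theorem spine_spineTree : spine (F.spineTree e hm) = F := by
  refine cut_glue F (fun y => e (Order.succ (e.symm y))) _
    (Finset.eq_of_subset_of_card_le (fun y hy => ?_) ?_)
  · obtain ⟨i, -, rfl⟩ := (F.spineTree e hm).2.mem_pathToRoot.mp hy
    rw [spineTree, iterate_spineMap]
    exact Subtype.prop _
  · set T := (F.spineTree e hm).2
    have hdepth : (F.spineMap e)^[T.depth (e ⟨0, hm⟩)] (e ⟨0, hm⟩) = e ⟨F.roots.card - 1, _⟩ :=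
      T.iterate_depth _
    rw [iterate_spineMap] at hdepth
    have := congrArg Fin.val (e.injective (Subtype.ext hdepth))
    show F.roots.card ≤ (T.pathToRoot (e ⟨0, hm⟩)).card
    rw [T.card_pathToRoot]
    simp only at this
    omega

end

theorem spineTree_spineOrdering (x : α × LabeledRootedTree α) (hm : 0 < (spine x).roots.card) :
    (spine x).spineTree (spineOrdering x) hm = x := by
  obtain ⟨v, T⟩ := x
  refine Prod.ext rfl (Subtype.ext (Prod.ext ?_ ?_))
  · show T.parent^[(spine (v, T)).roots.card - 1] v = T.root
    rw [card_roots_spine, Nat.add_sub_cancel, T.iterate_depth]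
  show (spine (v, T)).spineMap (spineOrdering (v, T)) = T.parent
  refine glue_cut (f := T.parent) (M := T.pathToRoot v) _ _ fun y => ?_
  obtain ⟨i, rfl⟩ := (spineOrdering (v, T)).surjective y
  rw [Equiv.symm_apply_apply]
  show T.parent^[(Order.succ i : Fin _)] v = T.parent (T.parent^[i] v)
  rw [← iterate_succ_apply' T.parent, Fin.val_orderSucc, ← T.iterate_min_depth v (i + 1)]
  congr 2
  rw [card_roots_spine, Nat.add_sub_cancel]

noncomputable def spineFiberEquiv (F : RootedForest α) (hm : 0 < F.roots.card) :
    {x : α × LabeledRootedTree α // spine x = F} ≃ (Fin F.roots.card ≃ F.roots) where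
  toFun x := Equiv.ofBijective
    (fun i => ⟨x.1.2.parent^[i] x.1.1, by
      obtain ⟨x, rfl⟩ := x
      exact iterate_mem_roots_spine x i.2⟩)
    (by obtain ⟨x, rfl⟩ := x; exact bijective_iterate_spine x)
  invFun o := ⟨F.spineTree o hm, F.spine_spineTree o hm⟩
  left_inv := by
    rintro ⟨x, rfl⟩
    exact Subtype.ext (spineTree_spineOrdering x hm)
  right_inv o := Equiv.ext fun i => Subtype.ext <| by
    simpa [spineTree, min_eq_left (Nat.le_sub_one_of_lt i.2)] using iterate_spineMap F o hm i

end RootedForest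

theorem card_fun_eq_card_prod_labeledRootedTree [DecidableEq α] [Finite α] [Nonempty α] :
    Nat.card (α → α) = Nat.card (α × LabeledRootedTree α) :=
  Nat.card_congr <| (Equiv.sigmaFiberEquiv RootedForest.core).symm.trans <|
    (Equiv.sigmaCongrRight fun F => (RootedForest.coreFiberEquivPerm F).trans <|
      (F.roots.equivFin.equivCongr (Equiv.refl _)).trans
        (F.spineFiberEquiv F.roots_nonempty.card_pos).symm).trans
    (Equiv.sigmaFiberEquiv RootedForest.spine)

/-- Cayley's formula: the number of labeled rooted trees on an `n`-element vertex set
is `n ^ (n - 1)`. -/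
theorem cayley (n : ℕ) (hn : 1 ≤ n) :
    Nat.card {rp : Fin n × (Fin n → Fin n) // IsRTree n rp} = n ^ (n - 1) := by
  have : Nonempty (Fin n) := ⟨⟨0, hn⟩⟩
  have h := card_fun_eq_card_prod_labeledRootedTree (α := Fin n)
  rw [Nat.card_prod, Nat.card_fun, Nat.card_fin] at h
  have hpow : n ^ n = n * n ^ (n - 1) := by rw [← pow_succ', Nat.sub_add_cancel hn]
  exact Nat.eq_of_mul_eq_mul_left hn (h.symm.trans hpow)
end

section
/- For a linearly ordered vertex set U with n ≥ 1 elements, there is a bijection between labeled rooted trees on U and sequences of length n-1 with entries in U; moreover, under this bijection, for each j ∈ U the number of occurrences of j in the sequence equals the number of immediate successors of j in the tree (its degree). -/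
namespace PrueferAux

/-- Rooted trees on a vertex type `V`. -/
def RT (V : Type) : Type :=
  {rp : V × (V → V) // rp.2 rp.1 = rp.1 ∧ ∀ j : V, ∃ k : ℕ, rp.2^[k] j = rp.1}

variable {V : Type}

lemma fixed_eq_root (T : RT V) {v : V} (h : T.1.2 v = v) : v = T.1.1 := by
  obtain ⟨k, hk⟩ := T.2.2 v
  rwa [Function.iterate_fixed h] at hk

section Counting

lemma natCard_eq_sum {α : Type} [Fintype α] (P : α → Prop) [DecidablePred P] :
    Nat.card {x // P x} = ∑ x : α, if P x then 1 else 0 := by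
  rw [Nat.card_eq_fintype_card, Fintype.card_subtype, Finset.card_filter]

lemma count_zero_iff {α : Type} [Fintype α] (P : α → Prop) :
    Nat.card {x // P x} = 0 ↔ ∀ x, ¬ P x := by
  classical
  rw [natCard_eq_sum P, Finset.sum_eq_zero_iff]
  simp

lemma sum_split [Fintype V] [DecidableEq V] (ℓ : V) (f : V → ℕ) :
    ∑ x : V, f x = f ℓ + ∑ x : {y : V // y ≠ ℓ}, f x.1 := by
  rw [← Finset.add_sum_erase _ f (Finset.mem_univ ℓ)]
  congr 1
  rw [← Finset.sum_subtype (Finset.univ.erase ℓ)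
      (p := fun y => y ≠ ℓ) (fun x => by simp) f]

lemma count_split [Fintype V] [DecidableEq V] (ℓ : V) (P : V → Prop) [DecidablePred P] :
    Nat.card {x : V // P x}
      = (if P ℓ then 1 else 0) + Nat.card {x : {y : V // y ≠ ℓ} // P x.1} := by
  classical
  rw [natCard_eq_sum, natCard_eq_sum, sum_split ℓ]

lemma count_cons {m : ℕ} (b : V) (a : Fin m → V) (w : V) [DecidableEq V] :
    Nat.card {k : Fin (m+1) // (Fin.cons b a : Fin (m+1) → V) k = w}
      = (if b = w then 1 else 0) + Nat.card {k : Fin m // a k = w} := by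
  rw [natCard_eq_sum, natCard_eq_sum, Fin.sum_univ_succ]
  simp

end Counting

section Trees

variable [Fintype V] [LinearOrder V]

/-- The set of childless vertices ("leaves"). -/
def leafSet (T : RT V) : Finset V :=
  Finset.univ.filter (fun v => ∀ i, i ≠ T.1.1 → T.1.2 i ≠ v)

lemma mem_leafSet {T : RT V} {v : V} :
    v ∈ leafSet T ↔ ∀ i, i ≠ T.1.1 → T.1.2 i ≠ v := by
  simp [leafSet]

lemma leafSet_nonempty [Nonempty V] (T : RT V) : (leafSet T).Nonempty := by
  classical
  set d : V → ℕ := fun v => Nat.find (T.2.2 v) with hd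
  obtain ⟨v₀, -, hv₀⟩ := Finset.exists_max_image Finset.univ d ⟨Classical.arbitrary V, Finset.mem_univ _⟩
  refine ⟨v₀, mem_leafSet.mpr fun i hi hpi => ?_⟩
  have h1 : d i ≠ 0 := by
    intro h0
    have := Nat.find_spec (T.2.2 i)
    rw [show Nat.find (T.2.2 i) = d i from rfl, h0] at this
    exact hi this
  obtain ⟨k, hk⟩ := Nat.exists_eq_succ_of_ne_zero h1
  have hspec : T.1.2^[d i] i = T.1.1 := Nat.find_spec (T.2.2 i)
  rw [hk, Function.iterate_succ_apply, hpi] at hspec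
  have h2 : d v₀ ≤ k := Nat.find_min' (T.2.2 v₀) hspec
  have h3 : d i ≤ d v₀ := hv₀ i (Finset.mem_univ i)
  omega

lemma root_has_child (h2 : 2 ≤ Fintype.card V) (T : RT V) :
    ∃ i, i ≠ T.1.1 ∧ T.1.2 i = T.1.1 := by
  classical
  obtain ⟨w, hw⟩ := Fintype.exists_ne_of_one_lt_card (by omega) T.1.1
  have h1 : Nat.find (T.2.2 w) ≠ 0 := by
    intro h0
    have := Nat.find_spec (T.2.2 w)
    rw [h0] at this
    exact hw this
  obtain ⟨k, hk⟩ := Nat.exists_eq_succ_of_ne_zero h1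
  refine ⟨T.1.2^[k] w, fun h => ?_, ?_⟩
  · exact Nat.find_min (T.2.2 w) (by omega : k < Nat.find (T.2.2 w)) h
  · have := Nat.find_spec (T.2.2 w)
    rwa [hk, Function.iterate_succ_apply'] at this

variable [Nonempty V]

noncomputable def minLeaf (T : RT V) : V := (leafSet T).min' (leafSet_nonempty T)

lemma minLeaf_mem (T : RT V) : minLeaf T ∈ leafSet T := Finset.min'_mem _ _

lemma minLeaf_ne_root (h2 : 2 ≤ Fintype.card V) (T : RT V) : T.1.1 ≠ minLeaf T := by
  obtain ⟨i, hi, hpi⟩ := root_has_child h2 T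
  intro h
  exact mem_leafSet.mp (minLeaf_mem T) i hi (by rw [hpi, h])

lemma minLeaf_not_image (h2 : 2 ≤ Fintype.card V) (T : RT V) :
    ∀ v, T.1.2 v ≠ minLeaf T := by
  intro v hv
  by_cases h : v = T.1.1
  · subst h
    rw [T.2.1] at hv
    exact minLeaf_ne_root h2 T hv
  · exact mem_leafSet.mp (minLeaf_mem T) v h hv

end Trees

section RestrictExtend

/-- Parent function of the restriction to `V \ {ℓ}`. -/
def pres (T : RT V) (ℓ : V) (h2 : ∀ v, T.1.2 v ≠ ℓ) :
    {x : V // x ≠ ℓ} → {x : V // x ≠ ℓ} := fun v => ⟨T.1.2 v.1, h2 v.1⟩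

lemma pres_iter (T : RT V) (ℓ : V) (h2 : ∀ v, T.1.2 v ≠ ℓ) :
    ∀ (k : ℕ) (v : {x : V // x ≠ ℓ}), ((pres T ℓ h2)^[k] v).1 = T.1.2^[k] v.1 := by
  intro k
  induction k with
  | zero => intro v; rfl
  | succ k ih =>
      intro v
      rw [Function.iterate_succ_apply', Function.iterate_succ_apply', ← ih v]
      rfl

/-- Restriction of a rooted tree to `V \ {ℓ}` when `ℓ` is never a parent and not the root. -/
def restrictT (T : RT V) (ℓ : V) (h2 : ∀ v, T.1.2 v ≠ ℓ) (h1 : T.1.1 ≠ ℓ) :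
    RT {x : V // x ≠ ℓ} :=
  ⟨(⟨T.1.1, h1⟩, pres T ℓ h2), Subtype.ext T.2.1, fun j => by
    obtain ⟨k, hk⟩ := T.2.2 j.1
    exact ⟨k, Subtype.ext (by rw [pres_iter]; exact hk)⟩⟩

variable [DecidableEq V]

/-- Parent function of the extension: `ℓ` gets parent `j`. -/
def pext (ℓ : V) (j : {x : V // x ≠ ℓ}) (q : {x : V // x ≠ ℓ} → {x : V // x ≠ ℓ}) :
    V → V := fun v => if h : v = ℓ then j.1 else (q ⟨v, h⟩).1

lemma pext_iter (ℓ : V) (j : {x : V // x ≠ ℓ}) (q : {x : V // x ≠ ℓ} → {x : V // x ≠ ℓ}) :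
    ∀ (k : ℕ) (v : {x : V // x ≠ ℓ}), (pext ℓ j q)^[k] v.1 = (q^[k] v).1 := by
  intro k
  induction k with
  | zero => intro v; rfl
  | succ k ih =>
      intro v
      rw [Function.iterate_succ_apply', Function.iterate_succ_apply', ih v]
      show (if h : (q^[k] v).1 = ℓ then j.1 else (q ⟨(q^[k] v).1, h⟩).1) = _
      rw [dif_neg (q^[k] v).2]

/-- Extension of a rooted tree on `V \ {ℓ}` to `V`, attaching `ℓ` below `j`. -/
def extendT (ℓ : V) (j : {x : V // x ≠ ℓ}) (T' : RT {x : V // x ≠ ℓ}) : RT V :=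
  ⟨(T'.1.1.1, pext ℓ j T'.1.2), by
      show (if h : T'.1.1.1 = ℓ then j.1 else (T'.1.2 ⟨T'.1.1.1, h⟩).1) = T'.1.1.1
      rw [dif_neg T'.1.1.2]
      exact congrArg Subtype.val T'.2.1,
    by
      intro v
      by_cases h : v = ℓ
      · obtain ⟨k, hk⟩ := T'.2.2 j
        refine ⟨k + 1, ?_⟩
        show (pext ℓ j T'.1.2)^[k+1] v = T'.1.1.1
        rw [Function.iterate_succ_apply]
        have hp : pext ℓ j T'.1.2 v = j.1 := dif_pos h
        rw [hp, pext_iter ℓ j T'.1.2 k j, hk]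
      · obtain ⟨k, hk⟩ := T'.2.2 ⟨v, h⟩
        exact ⟨k, by
          show (pext ℓ j T'.1.2)^[k] v = T'.1.1.1
          rw [show v = (⟨v, h⟩ : {x : V // x ≠ ℓ}).1 from rfl, pext_iter, hk]⟩⟩

lemma extendT_root (ℓ : V) (j : {x : V // x ≠ ℓ}) (T' : RT {x : V // x ≠ ℓ}) :
    (extendT ℓ j T').1.1 = T'.1.1.1 := rfl

lemma extendT_p_self (ℓ : V) (j : {x : V // x ≠ ℓ}) (T' : RT {x : V // x ≠ ℓ}) :
    (extendT ℓ j T').1.2 ℓ = j.1 := dif_pos rfl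

lemma extendT_p_ne (ℓ : V) (j : {x : V // x ≠ ℓ}) (T' : RT {x : V // x ≠ ℓ})
    {v : V} (h : v ≠ ℓ) : (extendT ℓ j T').1.2 v = (T'.1.2 ⟨v, h⟩).1 := dif_neg h

lemma extendT_not_image (ℓ : V) (j : {x : V // x ≠ ℓ}) (T' : RT {x : V // x ≠ ℓ}) :
    ∀ v, (extendT ℓ j T').1.2 v ≠ ℓ := by
  intro v
  by_cases h : v = ℓ
  · rw [h, extendT_p_self]; exact j.2
  · rw [extendT_p_ne ℓ j T' h]; exact (T'.1.2 ⟨v, h⟩).2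

lemma extend_restrict (T : RT V) (ℓ : V) (h2 : ∀ v, T.1.2 v ≠ ℓ) (h1 : T.1.1 ≠ ℓ) :
    extendT ℓ ⟨T.1.2 ℓ, h2 ℓ⟩ (restrictT T ℓ h2 h1) = T := by
  refine Subtype.ext (Prod.ext rfl (funext fun v => ?_))
  show (if h : v = ℓ then T.1.2 ℓ else (T.1.2 v)) = T.1.2 v
  split
  · next h => rw [h]
  · rfl

lemma restrict_extend (ℓ : V) (j : {x : V // x ≠ ℓ}) (T' : RT {x : V // x ≠ ℓ})
    (h2 : ∀ v, (extendT ℓ j T').1.2 v ≠ ℓ) (h1 : (extendT ℓ j T').1.1 ≠ ℓ) :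
    restrictT (extendT ℓ j T') ℓ h2 h1 = T' := by
  refine Subtype.ext (Prod.ext (Subtype.ext rfl) (funext fun v => Subtype.ext ?_))
  show (extendT ℓ j T').1.2 v.1 = (T'.1.2 v).1
  rw [extendT_p_ne ℓ j T' v.2]

end RestrictExtend

section Step

variable [Fintype V] [LinearOrder V] (m : ℕ)
variable (E : ∀ ℓ : V, RT {x : V // x ≠ ℓ} ≃ (Fin m → {x : V // x ≠ ℓ}))

/-- The Prüfer code: first entry is the parent of the minimal leaf, the rest is the
(recursively obtained) code of the restricted tree. -/
noncomputable def encA (hV : Fintype.card V = m + 2) (T : RT V) : Fin (m + 1) → V :=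
  letI : Nonempty V := Fintype.card_pos_iff.mp (by omega)
  Fin.cons (T.1.2 (minLeaf T))
    (fun i => (E (minLeaf T)
      (restrictT T (minLeaf T) (minLeaf_not_image (by omega) T)
        (minLeaf_ne_root (by omega) T)) i).1)

variable (hE : ∀ (ℓ : V) (T' : RT {x : V // x ≠ ℓ}) (j' : {x : V // x ≠ ℓ}),
  Nat.card {k : Fin m // E ℓ T' k = j'}
    = Nat.card {i : {x : V // x ≠ ℓ} // i ≠ T'.1.1 ∧ T'.1.2 i = j'})

lemma encA_count (hV : Fintype.card V = m + 2)
    (hE : ∀ (ℓ : V) (T' : RT {x : V // x ≠ ℓ}) (j' : {x : V // x ≠ ℓ}),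
      Nat.card {k : Fin m // E ℓ T' k = j'}
        = Nat.card {i : {x : V // x ≠ ℓ} // i ≠ T'.1.1 ∧ T'.1.2 i = j'})
    (T : RT V) (w : V) :
    Nat.card {k : Fin (m+1) // encA m E hV T k = w}
      = Nat.card {i : V // i ≠ T.1.1 ∧ T.1.2 i = w} := by
  letI : Nonempty V := Fintype.card_pos_iff.mp (by omega)
  set ℓ := minLeaf T with hℓ
  have hni : ∀ v, T.1.2 v ≠ ℓ := minLeaf_not_image (by omega) T
  have hnr : T.1.1 ≠ ℓ := minLeaf_ne_root (by omega) T
  set T' := restrictT T ℓ hni hnr with hT'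
  have key : encA m E hV T
      = (Fin.cons (T.1.2 ℓ) (fun i => (E ℓ T' i).1) : Fin (m+1) → V) := rfl
  by_cases hw : w = ℓ
  · subst hw
    have L : Nat.card {k : Fin (m+1) // encA m E hV T k = ℓ} = 0 :=
      (count_zero_iff _).mpr (by
        intro k
        rw [key]
        refine Fin.cases ?_ ?_ k
        · rw [Fin.cons_zero]; exact hni ℓ
        · intro i; rw [Fin.cons_succ]; exact (E ℓ T' i).2)
    have R : Nat.card {i : V // i ≠ T.1.1 ∧ T.1.2 i = ℓ} = 0 :=
      (count_zero_iff _).mpr (by rintro i ⟨-, hpi⟩; exact hni i hpi)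
    rw [L, R]
  · simp only [key]
    rw [count_cons]
    rw [count_split ℓ (fun i => i ≠ T.1.1 ∧ T.1.2 i = w)]
    have h1 : Nat.card {k : Fin m // (E ℓ T' k).1 = w}
        = Nat.card {k : Fin m // E ℓ T' k = ⟨w, hw⟩} :=
      Nat.card_congr (Equiv.subtypeEquivRight fun k =>
        ⟨fun h => Subtype.ext h, fun h => congrArg Subtype.val h⟩)
    have h2 : Nat.card {i : {x : V // x ≠ ℓ} // i ≠ T'.1.1 ∧ T'.1.2 i = ⟨w, hw⟩}
        = Nat.card {x : {y : V // y ≠ ℓ} // x.1 ≠ T.1.1 ∧ T.1.2 x.1 = w} :=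
      Nat.card_congr (Equiv.subtypeEquivRight fun i => by
        simp only [hT', restrictT, pres, Ne, Subtype.ext_iff])
    rw [h1, hE ℓ T' ⟨w, hw⟩, h2]
    simp [Ne.symm hnr]


def nonOccSet [DecidableEq V] (a : Fin (m + 1) → V) : Finset V :=
  Finset.univ.filter (fun v => ∀ k, a k ≠ v)

lemma nonOccSet_nonempty [DecidableEq V] (hV : Fintype.card V = m + 2) (a : Fin (m + 1) → V) :
    (nonOccSet m a).Nonempty := by
  by_contra h
  have hsurj : Function.Surjective a := by
    intro v
    by_contra hv
    push_neg at hv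
    exact h ⟨v, Finset.mem_filter.mpr ⟨Finset.mem_univ _, fun k => hv k⟩⟩
  have := Fintype.card_le_of_surjective a hsurj
  rw [hV, Fintype.card_fin] at this
  omega

noncomputable def minNonOcc [DecidableEq V] (hV : Fintype.card V = m + 2)
    (a : Fin (m + 1) → V) : V :=
  (nonOccSet m a).min' (nonOccSet_nonempty m hV a)

lemma minNonOcc_spec [DecidableEq V] (hV : Fintype.card V = m + 2) (a : Fin (m + 1) → V) :
    ∀ k, a k ≠ minNonOcc m hV a := by
  have := (nonOccSet m a).min'_mem (nonOccSet_nonempty m hV a)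
  exact (Finset.mem_filter.mp this).2

/-- Prüfer decoding. -/
noncomputable def decA (hV : Fintype.card V = m + 2) (a : Fin (m + 1) → V) : RT V :=
  extendT (minNonOcc m hV a) ⟨a 0, minNonOcc_spec m hV a 0⟩
    ((E (minNonOcc m hV a)).symm (fun i => ⟨a i.succ, minNonOcc_spec m hV a i.succ⟩))

lemma enc_congr (T : RT V) {ℓ₁ ℓ₂ : V} (h : ℓ₁ = ℓ₂)
    (pa : ∀ v, T.1.2 v ≠ ℓ₁) (pb : T.1.1 ≠ ℓ₁)
    (pa' : ∀ v, T.1.2 v ≠ ℓ₂) (pb' : T.1.1 ≠ ℓ₂) (i : Fin m) :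
    (E ℓ₁ (restrictT T ℓ₁ pa pb) i).1 = (E ℓ₂ (restrictT T ℓ₂ pa' pb') i).1 := by
  subst h; rfl

lemma min'_congr {s t : Finset V} (h : s = t) (hs : s.Nonempty) (ht : t.Nonempty) :
    s.min' hs = t.min' ht := by subst h; rfl

lemma leafSet_decA (hV : Fintype.card V = m + 2)
    (hE : ∀ (ℓ : V) (T' : RT {x : V // x ≠ ℓ}) (j' : {x : V // x ≠ ℓ}),
      Nat.card {k : Fin m // E ℓ T' k = j'}
        = Nat.card {i : {x : V // x ≠ ℓ} // i ≠ T'.1.1 ∧ T'.1.2 i = j'})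
    (a : Fin (m + 1) → V) :
    leafSet (decA m E hV a) = nonOccSet m a := by
  set ℓ := minNonOcc m hV a with hℓ
  set T'' := (E ℓ).symm (fun i => ⟨a i.succ, minNonOcc_spec m hV a i.succ⟩) with hT''
  set j : {x : V // x ≠ ℓ} := ⟨a 0, minNonOcc_spec m hV a 0⟩ with hj
  have hdec : decA m E hV a = extendT ℓ j T'' := rfl
  have hcode : E ℓ T'' = fun i => (⟨a i.succ, minNonOcc_spec m hV a i.succ⟩ : {x : V // x ≠ ℓ}) :=
    (E ℓ).apply_symm_apply _
  have hcodeval : ∀ i : Fin m, (E ℓ T'' i).1 = a i.succ := by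
    intro i; rw [hcode]
  ext v
  rw [mem_leafSet, hdec]
  simp only [nonOccSet, Finset.mem_filter, Finset.mem_univ, true_and]
  by_cases hv : v = ℓ
  · exact iff_of_true (fun i _ hpi => (extendT_not_image ℓ j T'' i) (hv ▸ hpi))
      (fun k h => minNonOcc_spec m hV a k (h.trans hv))
  · have hcc : (∀ i' : {x : V // x ≠ ℓ}, ¬(i' ≠ T''.1.1 ∧ T''.1.2 i' = ⟨v, hv⟩))
        ↔ (∀ k : Fin m, ¬(E ℓ T'' k = ⟨v, hv⟩)) := by
      rw [← count_zero_iff, ← count_zero_iff, hE ℓ T'' ⟨v, hv⟩]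
    constructor
    · intro hL k
      refine Fin.cases ?_ ?_ k
      · intro h0
        have hroot : ℓ ≠ (extendT ℓ j T'').1.1 := Ne.symm T''.1.1.2
        have h2 := hL ℓ hroot
        rw [extendT_p_self] at h2
        exact h2 h0
      · intro i hi
        have h1 : E ℓ T'' i ≠ ⟨v, hv⟩ := by
          refine hcc.mp ?_ i
          rintro i' ⟨hi1, hi2⟩
          have hval : i'.1 ≠ (extendT ℓ j T'').1.1 := by
            intro h; exact hi1 (Subtype.ext h)
          refine hL i'.1 hval ?_
          rw [extendT_p_ne ℓ j T'' i'.2]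
          exact congrArg Subtype.val hi2
        exact h1 (Subtype.ext (by rw [hcodeval i]; exact hi))
    · intro hR i hi hpi
      by_cases h : i = ℓ
      · subst h
        rw [extendT_p_self] at hpi
        exact hR 0 hpi
      · rw [extendT_p_ne ℓ j T'' h] at hpi
        have h2 : ∀ k : Fin m, ¬(E ℓ T'' k = ⟨v, hv⟩) := by
          intro k hk
          exact hR k.succ (by rw [← hcodeval k, hk])
        refine hcc.mpr h2 ⟨i, h⟩ ⟨fun hc => hi (congrArg Subtype.val hc), Subtype.ext hpi⟩

lemma encA_decA (hV : Fintype.card V = m + 2)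
    (hE : ∀ (ℓ : V) (T' : RT {x : V // x ≠ ℓ}) (j' : {x : V // x ≠ ℓ}),
      Nat.card {k : Fin m // E ℓ T' k = j'}
        = Nat.card {i : {x : V // x ≠ ℓ} // i ≠ T'.1.1 ∧ T'.1.2 i = j'})
    (a : Fin (m + 1) → V) :
    encA m E hV (decA m E hV a) = a := by
  letI : Nonempty V := Fintype.card_pos_iff.mp (by omega)
  set ℓ := minNonOcc m hV a with hℓ
  set T'' := (E ℓ).symm (fun i => ⟨a i.succ, minNonOcc_spec m hV a i.succ⟩) with hT''
  set j : {x : V // x ≠ ℓ} := ⟨a 0, minNonOcc_spec m hV a 0⟩ with hj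
  set T : RT V := decA m E hV a with hT
  have hdec : T = extendT ℓ j T'' := rfl
  have hcode : E ℓ T'' = fun i => (⟨a i.succ, minNonOcc_spec m hV a i.succ⟩ : {x : V // x ≠ ℓ}) :=
    (E ℓ).apply_symm_apply _
  have hml : minLeaf T = ℓ :=
    min'_congr (leafSet_decA m E hV hE a) _ _
  have hkey : encA m E hV T
      = (Fin.cons (T.1.2 (minLeaf T))
          (fun i => (E (minLeaf T)
            (restrictT T (minLeaf T) (minLeaf_not_image (by omega) T)
              (minLeaf_ne_root (by omega) T)) i).1) : Fin (m+1) → V) := rfl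
  funext k
  rw [hkey]
  refine Fin.cases ?_ ?_ k
  · rw [Fin.cons_zero, hml, hdec, extendT_p_self]
  · intro i
    rw [Fin.cons_succ]
    have pa : ∀ v, T.1.2 v ≠ ℓ := by rw [hdec]; exact extendT_not_image ℓ j T''
    have pb : T.1.1 ≠ ℓ := by rw [hdec]; exact T''.1.1.2
    rw [enc_congr m E T hml (minLeaf_not_image (by omega) T) (minLeaf_ne_root (by omega) T) pa pb i]
    have hre : restrictT T ℓ pa pb = T'' :=
      restrict_extend ℓ j T'' pa pb
    rw [hre, hcode]

lemma leafSet_encA (hV : Fintype.card V = m + 2)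
    (hE : ∀ (ℓ : V) (T' : RT {x : V // x ≠ ℓ}) (j' : {x : V // x ≠ ℓ}),
      Nat.card {k : Fin m // E ℓ T' k = j'}
        = Nat.card {i : {x : V // x ≠ ℓ} // i ≠ T'.1.1 ∧ T'.1.2 i = j'})
    (T : RT V) :
    nonOccSet m (encA m E hV T) = leafSet T := by
  ext v
  rw [mem_leafSet]
  simp only [nonOccSet, Finset.mem_filter, Finset.mem_univ, true_and]
  have h := encA_count m E hV hE T v
  constructor
  · intro hv i hi hpi
    have h0 : Nat.card {k : Fin (m+1) // encA m E hV T k = v} = 0 :=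
      (count_zero_iff _).mpr hv
    rw [h] at h0
    exact (count_zero_iff _).mp h0 i ⟨hi, hpi⟩
  · intro hv k
    have h0 : Nat.card {i : V // i ≠ T.1.1 ∧ T.1.2 i = v} = 0 :=
      (count_zero_iff _).mpr (by rintro i ⟨hi1, hi2⟩; exact hv i hi1 hi2)
    rw [← h] at h0
    exact (count_zero_iff _).mp h0 k

lemma encA_inj (hV : Fintype.card V = m + 2)
    (hE : ∀ (ℓ : V) (T' : RT {x : V // x ≠ ℓ}) (j' : {x : V // x ≠ ℓ}),
      Nat.card {k : Fin m // E ℓ T' k = j'}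
        = Nat.card {i : {x : V // x ≠ ℓ} // i ≠ T'.1.1 ∧ T'.1.2 i = j'}) :
    Function.Injective (encA m E hV) := by
  letI : Nonempty V := Fintype.card_pos_iff.mp (by omega)
  intro T₁ T₂ heq
  have hls : leafSet T₁ = leafSet T₂ := by
    rw [← leafSet_encA m E hV hE T₁, ← leafSet_encA m E hV hE T₂, heq]
  have hml : minLeaf T₁ = minLeaf T₂ := min'_congr hls _ _
  set ℓ := minLeaf T₁ with hℓ
  have p1a : ∀ v, T₁.1.2 v ≠ ℓ := minLeaf_not_image (by omega) T₁
  have p1b : T₁.1.1 ≠ ℓ := minLeaf_ne_root (by omega) T₁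
  have p2a : ∀ v, T₂.1.2 v ≠ ℓ := by rw [hml]; exact minLeaf_not_image (by omega) T₂
  have p2b : T₂.1.1 ≠ ℓ := by rw [hml]; exact minLeaf_ne_root (by omega) T₂
  have hkey₁ : encA m E hV T₁
      = (Fin.cons (T₁.1.2 (minLeaf T₁))
          (fun i => (E (minLeaf T₁)
            (restrictT T₁ (minLeaf T₁) (minLeaf_not_image (by omega) T₁)
              (minLeaf_ne_root (by omega) T₁)) i).1) : Fin (m+1) → V) := rfl
  have hkey₂ : encA m E hV T₂
      = (Fin.cons (T₂.1.2 (minLeaf T₂))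
          (fun i => (E (minLeaf T₂)
            (restrictT T₂ (minLeaf T₂) (minLeaf_not_image (by omega) T₂)
              (minLeaf_ne_root (by omega) T₂)) i).1) : Fin (m+1) → V) := rfl
  have hhead : T₁.1.2 ℓ = T₂.1.2 ℓ := by
    have h0 := congrFun heq 0
    rw [hkey₁, hkey₂, Fin.cons_zero, Fin.cons_zero] at h0
    rw [← hℓ] at h0
    rw [← hml] at h0
    exact h0
  have htail : restrictT T₁ ℓ p1a p1b = restrictT T₂ ℓ p2a p2b := by
    apply (E ℓ).injective
    funext i
    apply Subtype.ext
    have hi := congrFun heq i.succ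
    rw [hkey₁, hkey₂, Fin.cons_succ, Fin.cons_succ] at hi
    calc (E ℓ (restrictT T₁ ℓ p1a p1b) i).1
        = (E (minLeaf T₁) (restrictT T₁ (minLeaf T₁) (minLeaf_not_image (by omega) T₁)
            (minLeaf_ne_root (by omega) T₁)) i).1 :=
          enc_congr m E T₁ hℓ _ _ _ _ i
      _ = (E (minLeaf T₂) (restrictT T₂ (minLeaf T₂) (minLeaf_not_image (by omega) T₂)
            (minLeaf_ne_root (by omega) T₂)) i).1 := hi
      _ = (E ℓ (restrictT T₂ ℓ p2a p2b) i).1 :=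
          enc_congr m E T₂ hml.symm _ _ _ _ i
  calc T₁ = extendT ℓ ⟨T₁.1.2 ℓ, p1a ℓ⟩ (restrictT T₁ ℓ p1a p1b) :=
        (extend_restrict T₁ ℓ p1a p1b).symm
    _ = extendT ℓ ⟨T₂.1.2 ℓ, p2a ℓ⟩ (restrictT T₂ ℓ p2a p2b) := by
        rw [htail, show (⟨T₁.1.2 ℓ, p1a ℓ⟩ : {x : V // x ≠ ℓ}) = ⟨T₂.1.2 ℓ, p2a ℓ⟩
          from Subtype.ext hhead]
    _ = T₂ := extend_restrict T₂ ℓ p2a p2b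

lemma step (hV : Fintype.card V = m + 2)
    (hE : ∀ (ℓ : V) (T' : RT {x : V // x ≠ ℓ}) (j' : {x : V // x ≠ ℓ}),
      Nat.card {k : Fin m // E ℓ T' k = j'}
        = Nat.card {i : {x : V // x ≠ ℓ} // i ≠ T'.1.1 ∧ T'.1.2 i = j'}) :
    ∃ e : RT V ≃ (Fin (m + 1) → V), ∀ (T : RT V) (w : V),
      Nat.card {k : Fin (m + 1) // e T k = w}
        = Nat.card {i : V // i ≠ T.1.1 ∧ T.1.2 i = w} := by
  refine ⟨Equiv.ofBijective (encA m E hV)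
    ⟨encA_inj m E hV hE, fun a => ⟨decA m E hV a, encA_decA m E hV hE a⟩⟩,
    fun T w => ?_⟩
  exact encA_count m E hV hE T w

end Step

lemma main : ∀ (n : ℕ) (V : Type) [Fintype V] [LinearOrder V], Fintype.card V = n + 1 →
    ∃ e : RT V ≃ (Fin n → V), ∀ (T : RT V) (w : V),
      Nat.card {k : Fin n // e T k = w}
        = Nat.card {i : V // i ≠ T.1.1 ∧ T.1.2 i = w} := by
  intro n
  induction n with
  | zero =>
    intro V _ _ hV
    haveI : Subsingleton V := Fintype.card_le_one_iff_subsingleton.mp (le_of_eq hV)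
    haveI : Nonempty V := Fintype.card_pos_iff.mp (by omega)
    haveI hrt : Subsingleton (RT V) :=
      ⟨fun a b => Subtype.ext (Prod.ext (Subsingleton.elim _ _)
        (funext fun v => Subsingleton.elim _ _))⟩
    have hT : RT V := ⟨(Classical.arbitrary V, id), rfl, fun j => ⟨0, Subsingleton.elim _ _⟩⟩
    refine ⟨⟨fun _ => (fun i => i.elim0), fun _ => hT,
      fun T => Subsingleton.elim _ _, fun a => funext fun i => i.elim0⟩, fun T w => ?_⟩
    have L : ∀ (P : Fin 0 → Prop), Nat.card {k : Fin 0 // P k} = 0 :=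
      fun P => (count_zero_iff _).mpr (fun k => k.elim0)
    rw [L, (count_zero_iff _).mpr
      (fun i (hi : i ≠ T.1.1 ∧ T.1.2 i = w) => hi.1 (Subsingleton.elim i T.1.1))]
  | succ m IH =>
    intro V _ _ hV
    have hI : ∀ ℓ : V, ∃ e : RT {x : V // x ≠ ℓ} ≃ (Fin m → {x : V // x ≠ ℓ}),
        ∀ (T' : RT {x : V // x ≠ ℓ}) (j' : {x : V // x ≠ ℓ}),
          Nat.card {k : Fin m // e T' k = j'}
            = Nat.card {i : {x : V // x ≠ ℓ} // i ≠ T'.1.1 ∧ T'.1.2 i = j'} := by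
      intro ℓ
      refine IH {x : V // x ≠ ℓ} ?_
      classical
      have h1 : Fintype.card {x : V // ¬ x = ℓ} = Fintype.card V - 1 := by
        rw [Fintype.card_subtype_compl, Fintype.card_subtype_eq]
      have h2 : Fintype.card {x : V // x ≠ ℓ} = Fintype.card {x : V // ¬ x = ℓ} :=
        Fintype.card_congr (Equiv.subtypeEquivRight fun _ => Iff.rfl)
      rw [h2, h1, hV]
      omega
    choose E hE using hI
    exact step m E hV hE

end PrueferAux

/-- Prüfer correspondence: for the linearly ordered vertex set `Fin n` (`n ≥ 1`) there is a
bijection between labeled rooted trees on `Fin n` and sequences of length `n - 1` with entries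
in `Fin n`, such that the number of occurrences of a vertex `j` in the sequence equals the
number of immediate successors (children) of `j` in the tree. -/
theorem pruefer (n : ℕ) (hn : 1 ≤ n) :
    ∃ e : {rp : Fin n × (Fin n → Fin n) // IsRTree n rp} ≃ (Fin (n - 1) → Fin n),
      ∀ (T : {rp : Fin n × (Fin n → Fin n) // IsRTree n rp}) (j : Fin n),
        Nat.card {k : Fin (n - 1) // e T k = j}
          = Nat.card {i : Fin n // i ≠ T.val.1 ∧ T.val.2 i = j} := by
  obtain ⟨m, rfl⟩ : ∃ m, n = m + 1 := ⟨n - 1, by omega⟩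
  obtain ⟨e, he⟩ := PrueferAux.main m (Fin (m + 1)) (by simp)
  exact ⟨e, he⟩
end

section
/- For an unlabeled rooted tree τ with n vertices, the number of labeled rooted trees on a fixed n-element set of isomorphism type τ, divided by the number of increasing rooted trees on that set (with a fixed linear order) of isomorphism type τ, equals the tree factorial τ!. -/
/-- Two labeled rooted trees are isomorphic if some relabeling bijection carries one to the
other. -/
def TreeRel (n : ℕ) (T T' : {rp : Fin n × (Fin n → Fin n) // IsRTree n rp}) : Prop :=
  ∃ e : Equiv.Perm (Fin n), e T.val.1 = T'.val.1 ∧ ∀ i, e (T.val.2 i) = T'.val.2 (e i)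

/-- Unlabeled rooted trees with `n` vertices: isomorphism classes of labeled rooted trees. -/
def UTree (n : ℕ) := Quot (TreeRel n)

/-- The number of vertices in the subtree rooted at `j` (the vertices weakly above `j`). -/
noncomputable def cardAbove (n : ℕ) (rp : Fin n × (Fin n → Fin n)) (j : Fin n) : ℕ :=
  Nat.card {i : Fin n // ∃ k : ℕ, rp.2^[k] i = j}

/-- The tree factorial `τ! = ∏_j |T_j|`. -/
noncomputable def treeFactorial (n : ℕ) (rp : Fin n × (Fin n → Fin n)) : ℕ :=
  ∏ j : Fin n, cardAbove n rp j

/-!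
Relabelings `e : Equiv.Perm (Fin n)` act on labeled rooted trees, and the trees of type `τ` form
the orbit of `T₀ = τ.out`. Sorting the relabelings that make `T₀` increasing by the tree
they produce gives `#{e | e • T₀ increasing} = i(τ) · #Stab(T₀)`, while
`r(τ) · #Stab(T₀) = n!`.
Such a relabeling is the same as an increasing labeling of `T₀`, and the hook length formula for
forests counts those: the number `e(F)` of increasing labelings of a forest `F` on `N` vertices
satisfies `e(F) · F! = N!`. Indeed the vertex labelled `0` is a root `ρ`, so
`e(F) = ∑_ρ e(F - ρ)`, and `F! = |F_ρ| · (F - ρ)!`; by induction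
`e(F) · F! = (N - 1)! · ∑_ρ |F_ρ| = N!`, since the subtrees of the roots partition `F`.
Hence `r(τ) · #Stab = n! = τ! · i(τ) · #Stab`.
-/

open Finset Function MulAction Equiv
open scoped Nat

theorem Function.IsFixedPt.iterate_eq_of_le {α : Type*} {p : α → α} {i x : α} {a b : ℕ}
    (hx : IsFixedPt p x) (hab : a ≤ b) (ha : p^[a] i = x) : p^[b] i = x := by
  rw [← Nat.sub_add_cancel hab, iterate_add_apply, ha, iterate_fixed hx]

theorem MulAction.card_orbit_mul_card_smul_mem {G X : Type*} [Group G] [MulAction G X]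
    (x : X) (A : Set X) :
    Nat.card (orbit G x) * Nat.card {g : G // g • x ∈ A} =
      Nat.card {y : orbit G x // (y : X) ∈ A} * Nat.card G := by
  have hsplit : {g : G // g • x ∈ A} ≃ {y : orbit G x // (y : X) ∈ A} × stabilizer G x :=
    ((orbitProdStabilizerEquivGroup G x).symm.subtypeEquiv fun _ => Iff.rfl).trans
      (prodSubtypeFstEquivSubtypeProd (β := stabilizer G x) (p := fun y : orbit G x => ↑y ∈ A))
  rw [Nat.card_congr hsplit, ← Nat.card_congr (orbitProdStabilizerEquivGroup G x),
    Nat.card_prod, Nat.card_prod, mul_left_comm]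

section Forest

variable {α : Type*} {s : Finset α} {p : α → α}

/-- A forest on `s` given by its parent map; the roots are the fixed points of `p`. -/
structure IsForest (s : Finset α) (p : α → α) : Prop where
  mapsTo : Set.MapsTo p s s
  exists_isFixedPt : ∀ j ∈ s, ∃ k, IsFixedPt p (p^[k] j)

open scoped Classical in
noncomputable def subtree (s : Finset α) (p : α → α) (v : α) : Finset α :=
  {i ∈ s | ∃ k, p^[k] i = v}

noncomputable def forestFactorial (s : Finset α) (p : α → α) : ℕ :=
  ∏ v ∈ s, #(subtree s p v)

/-- Labels `0, …, #s - 1`, smaller at the parent; extended by `0` outside `s`. -/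
structure IsIncreasingLabeling (s : Finset α) (p : α → α) (f : α → ℕ) : Prop where
  eq_zero_of_notMem : ∀ j ∉ s, f j = 0
  injOn : Set.InjOn f s
  lt_card : ∀ j ∈ s, f j < #s
  lt_of_ne : ∀ j ∈ s, p j ≠ j → f (p j) < f j

instance (s : Finset α) (p : α → α) : Finite {f // IsIncreasingLabeling s p f} := by
  refine Finite.of_injective (fun f (j : s) => (⟨f.1 j, f.2.lt_card j j.2⟩ : Fin #s))
    fun f g hfg => ?_
  ext j
  by_cases hj : j ∈ s
  · simpa using congrFun hfg ⟨j, hj⟩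
  · rw [f.2.eq_zero_of_notMem j hj, g.2.eq_zero_of_notMem j hj]

namespace IsIncreasingLabeling

variable {f : α → ℕ}

theorem image_eq_range (hf : IsIncreasingLabeling s p f) : s.image f = range #s :=
  eq_of_subset_of_card_le (fun _ hx => by
      obtain ⟨j, hj, rfl⟩ := mem_image.1 hx
      exact mem_range.2 (hf.lt_card j hj))
    (by rw [card_range, card_image_of_injOn hf.injOn])

theorem exists_isFixedPt_eq_zero (hf : IsIncreasingLabeling s p f) (hs : s.Nonempty) :
    ∃ ρ ∈ s, IsFixedPt p ρ ∧ f ρ = 0 := by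
  obtain ⟨ρ, hρs, hρ0⟩ := mem_image.1 (hf.image_eq_range ▸ mem_range.2 (card_pos.2 hs))
  refine ⟨ρ, hρs, by_contra fun hρ => ?_, hρ0⟩
  have := hf.lt_of_ne ρ hρs hρ
  omega

theorem pos_of_mem_erase [DecidableEq α] (hf : IsIncreasingLabeling s p f) {ρ j : α}
    (hρs : ρ ∈ s) (hρ0 : f ρ = 0) (hj : j ∈ s.erase ρ) : 0 < f j :=
  Nat.pos_of_ne_zero fun hj0 =>
    ne_of_mem_erase hj (hf.injOn (mem_of_mem_erase hj) hρs (hj0.trans hρ0.symm))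

end IsIncreasingLabeling

theorem card_perm_lt_eq_card_isIncreasingLabeling {n : ℕ} (p : Fin n → Fin n) :
    Nat.card {e : Perm (Fin n) // ∀ j, p j ≠ j → e (p j) < e j} =
      Nat.card {f // IsIncreasingLabeling univ p f} := by
  refine Nat.card_eq_of_bijective (fun e => ⟨fun j => e.1 j, fun j hj => absurd (mem_univ j) hj,
    fun i _ j _ h => e.1.injective (Fin.ext h), fun j _ => by simp, fun j _ => e.2 j⟩)
    ⟨fun e e' h => Subtype.ext (Equiv.ext fun j => Fin.ext (congrFun (congrArg Subtype.val h) j)),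
      fun ⟨f, hf⟩ => ?_⟩
  have hlt : ∀ j, f j < n := fun j => by simpa using hf.lt_card j (mem_univ j)
  have hinj : Injective fun j => (⟨f j, hlt j⟩ : Fin n) :=
    fun i j h => hf.injOn (mem_univ i) (mem_univ j) (congrArg Fin.val h)
  exact ⟨⟨Equiv.ofBijective _ (Finite.injective_iff_bijective.1 hinj),
    fun j => hf.lt_of_ne j (mem_univ j)⟩, rfl⟩

variable [DecidableEq α] {ρ : α}

theorem IsForest.sum_card_subtree (hF : IsForest s p) :
    ∑ ρ ∈ s with IsFixedPt p ρ, #(subtree s p ρ) = #s := by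
  rw [← card_biUnion]
  · congr 1
    ext i
    simp only [mem_biUnion, mem_filter, subtree]
    refine ⟨fun ⟨_, _, hi, _⟩ => hi, fun hi => ?_⟩
    obtain ⟨k, hk⟩ := hF.exists_isFixedPt i hi
    exact ⟨p^[k] i, ⟨hF.mapsTo.iterate k hi, hk⟩, hi, k, rfl⟩
  · intro x hx y hy hxy
    rw [onFun, disjoint_left]
    rintro i hix hiy
    simp only [mem_coe, subtree, mem_filter] at hx hy hix hiy
    obtain ⟨-, a, ha⟩ := hix
    obtain ⟨-, b, hb⟩ := hiy
    rcases le_total a b with hab | hab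
    · exact hxy ((hx.2.iterate_eq_of_le hab ha).symm.trans hb)
    · exact hxy (ha.symm.trans (hy.2.iterate_eq_of_le hab hb))

/-- Deleting the root `ρ` turns its children into roots. -/
def deleteRoot (p : α → α) (ρ : α) : α → α :=
  fun j => if p j = ρ then j else p j

theorem deleteRoot_of_ne {j : α} (h : p j ≠ ρ) : deleteRoot p ρ j = p j := if_neg h

theorem iterate_deleteRoot_of_iterate_eq (hρ : IsFixedPt p ρ) {v : α} (hv : v ≠ ρ) :
    ∀ k i, p^[k] i = v → (deleteRoot p ρ)^[k] i = v := by
  intro k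
  induction k with
  | zero => exact fun _ h => h
  | succ k ih =>
    intro i h
    rw [iterate_succ_apply] at h ⊢
    by_cases hpi : p i = ρ
    · rw [hpi, iterate_fixed hρ] at h
      exact absurd h.symm hv
    · rw [deleteRoot_of_ne hpi]
      exact ih (p i) h

theorem exists_iterate_eq_of_iterate_deleteRoot {v : α} :
    ∀ k i, (deleteRoot p ρ)^[k] i = v → ∃ m, p^[m] i = v := by
  intro k
  induction k with
  | zero => exact fun i h => ⟨0, h⟩
  | succ k ih =>
    intro i h
    rw [iterate_succ_apply] at h
    by_cases hpi : p i = ρ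
    · rw [deleteRoot, if_pos hpi] at h
      exact ih i h
    · rw [deleteRoot_of_ne hpi] at h
      obtain ⟨m, hm⟩ := ih (p i) h
      exact ⟨m + 1, hm⟩

theorem subtree_deleteRoot (hρ : IsFixedPt p ρ) {v : α} (hv : v ≠ ρ) :
    subtree (s.erase ρ) (deleteRoot p ρ) v = subtree s p v := by
  ext i
  simp only [subtree, mem_filter, mem_erase]
  constructor
  · rintro ⟨⟨-, his⟩, k, hk⟩
    exact ⟨his, exists_iterate_eq_of_iterate_deleteRoot k i hk⟩
  · rintro ⟨his, k, hk⟩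
    have hiρ : i ≠ ρ := by
      rintro rfl
      rw [iterate_fixed hρ] at hk
      exact hv hk.symm
    exact ⟨⟨hiρ, his⟩, k, iterate_deleteRoot_of_iterate_eq hρ hv k i hk⟩

theorem forestFactorial_eq_mul (hρ : IsFixedPt p ρ) (hρs : ρ ∈ s) :
    forestFactorial s p = #(subtree s p ρ) * forestFactorial (s.erase ρ) (deleteRoot p ρ) := by
  rw [forestFactorial, ← mul_prod_erase s _ hρs, forestFactorial]
  congr 1
  exact prod_congr rfl fun v hv => by rw [subtree_deleteRoot hρ (ne_of_mem_erase hv)]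

theorem isFixedPt_or_iterate_deleteRoot_eq (j : α) (k : ℕ) :
    IsFixedPt (deleteRoot p ρ) ((deleteRoot p ρ)^[k] j) ∨
      (deleteRoot p ρ)^[k] j = p^[k] j := by
  induction k with
  | zero => exact Or.inr rfl
  | succ k ih =>
    rw [iterate_succ_apply', iterate_succ_apply']
    rcases ih with hfix | heq
    · exact Or.inl (by rw [hfix.eq]; exact hfix)
    · rw [heq]
      by_cases hx : p (p^[k] j) = ρ
      · left
        rw [deleteRoot, if_pos hx, IsFixedPt, deleteRoot, if_pos hx]
      · exact Or.inr (deleteRoot_of_ne hx)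

theorem IsForest.erase_deleteRoot (hF : IsForest s p) :
    IsForest (s.erase ρ) (deleteRoot p ρ) where
  mapsTo j hj := by
    rw [mem_coe, mem_erase] at hj ⊢
    by_cases hpj : p j = ρ
    · rwa [deleteRoot, if_pos hpj]
    · rw [deleteRoot_of_ne hpj]
      exact ⟨hpj, hF.mapsTo hj.2⟩
  exists_isFixedPt j hj := by
    obtain ⟨k, hk⟩ := hF.exists_isFixedPt j (mem_of_mem_erase hj)
    refine ⟨k, (isFixedPt_or_iterate_deleteRoot_eq j k).elim id fun heq => ?_⟩
    rw [heq, IsFixedPt, deleteRoot]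
    split_ifs <;> [rfl; exact hk]

def insertRoot (s : Finset α) (ρ : α) (f : α → ℕ) : α → ℕ :=
  fun j => if j ∈ s.erase ρ then f j + 1 else 0

namespace IsIncreasingLabeling

variable {f : α → ℕ}

theorem insertRoot (hs : Set.MapsTo p s s) (hρs : ρ ∈ s) (hρ : IsFixedPt p ρ)
    (hf : IsIncreasingLabeling (s.erase ρ) (deleteRoot p ρ) f) :
    IsIncreasingLabeling s p (insertRoot s ρ f) := by
  have hcard := card_erase_add_one hρs
  refine ⟨fun j hj => if_neg fun h => hj (mem_of_mem_erase h), ?_, fun j hj => ?_, ?_⟩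
  · intro j₁ h₁ j₂ h₂ h
    simp only [_root_.insertRoot] at h
    split_ifs at h with e₁ e₂ e₂
    · exact hf.injOn e₁ e₂ (by omega)
    · rw [mem_erase, not_and_or, not_not] at e₁ e₂
      rw [e₁.resolve_right (not_not.2 h₁), e₂.resolve_right (not_not.2 h₂)]
  · simp only [_root_.insertRoot]
    split_ifs with hj'
    · have := hf.lt_card j hj'
      omega
    · omega
  · intro j hj hpj
    have hj' : j ∈ s.erase ρ := mem_erase.2 ⟨fun h => hpj (h ▸ hρ), hj⟩
    simp only [_root_.insertRoot, if_pos hj']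
    by_cases hpjρ : p j = ρ
    · rw [if_neg (by simp [hpjρ])]
      omega
    · rw [if_pos (mem_erase.2 ⟨hpjρ, hs hj⟩)]
      have := hf.lt_of_ne j hj' (by rwa [deleteRoot_of_ne hpjρ])
      rw [deleteRoot_of_ne hpjρ] at this
      omega

theorem pred (hs : Set.MapsTo p s s) (hf : IsIncreasingLabeling s p f) (hρs : ρ ∈ s)
    (hρ0 : f ρ = 0) : IsIncreasingLabeling (s.erase ρ) (deleteRoot p ρ) (fun j => f j - 1) := by
  have hcard := card_erase_add_one hρs
  have hpos := fun {j} (hj : j ∈ s.erase ρ) => hf.pos_of_mem_erase hρs hρ0 hj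
  refine ⟨fun j hj => ?_, fun j₁ h₁ j₂ h₂ h => ?_, fun j hj => ?_, fun j hj hdj => ?_⟩
  · by_cases hjρ : j = ρ
    · simp [hjρ, hρ0]
    · simp [hf.eq_zero_of_notMem j fun h => hj (mem_erase.2 ⟨hjρ, h⟩)]
  · have := hpos h₁
    have := hpos h₂
    exact hf.injOn (mem_of_mem_erase h₁) (mem_of_mem_erase h₂) (by omega)
  · have := hf.lt_card j (mem_of_mem_erase hj)
    have := hpos hj
    omega
  · have hpjρ : p j ≠ ρ := fun h => hdj (if_pos h)
    rw [deleteRoot_of_ne hpjρ] at hdj ⊢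
    have := hf.lt_of_ne j (mem_of_mem_erase hj) hdj
    have := hpos (mem_erase.2 ⟨hpjρ, hs (mem_of_mem_erase hj)⟩)
    omega

theorem insertRoot_pred (hf : IsIncreasingLabeling s p f) (hρs : ρ ∈ s) (hρ0 : f ρ = 0) :
    _root_.insertRoot s ρ (fun j => f j - 1) = f := by
  ext j
  simp only [_root_.insertRoot]
  split_ifs with hj
  · have := hf.pos_of_mem_erase hρs hρ0 hj
    omega
  · rw [mem_erase, not_and_or, not_not] at hj
    rcases hj with rfl | hj
    · exact hρ0.symm
    · exact (hf.eq_zero_of_notMem j hj).symm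

end IsIncreasingLabeling

/-- Sort the increasing labelings by the root that carries the label `0`. -/
theorem card_isIncreasingLabeling_eq_sum (hs : Set.MapsTo p s s) (hne : s.Nonempty) :
    Nat.card {f // IsIncreasingLabeling s p f} =
      ∑ ρ ∈ s with IsFixedPt p ρ,
        Nat.card {f // IsIncreasingLabeling (s.erase ρ) (deleteRoot p ρ) f} := by
  rw [← sum_coe_sort, ← Nat.card_sigma]
  refine (Nat.card_eq_of_bijective (fun x => ⟨insertRoot s x.1 x.2.1,
    x.2.2.insertRoot hs (mem_filter.1 x.1.2).1 (mem_filter.1 x.1.2).2⟩)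
    ⟨?_, fun ⟨f, hf⟩ => ?_⟩).symm
  · rintro ⟨⟨ρ, hρ⟩, f, hf⟩ ⟨⟨ρ', hρ'⟩, g, hg⟩ h
    have h := congrArg Subtype.val h
    simp only at h
    obtain rfl : ρ = ρ' := by
      have := congrFun h ρ
      simp only [insertRoot, mem_erase, ne_eq, not_true_eq_false, false_and, if_false] at this
      split_ifs at this with hρρ'
      by_contra hne
      exact hρρ' ⟨hne, (mem_filter.1 hρ).1⟩
    refine Sigma.subtype_ext rfl (funext fun j => ?_)
    by_cases hj : j ∈ s.erase ρ
    · simpa [insertRoot, hj] using congrFun h j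
    · exact (hf.eq_zero_of_notMem j hj).trans (hg.eq_zero_of_notMem j hj).symm
  · obtain ⟨ρ, hρs, hρ, hρ0⟩ := hf.exists_isFixedPt_eq_zero hne
    exact ⟨⟨⟨ρ, mem_filter.2 ⟨hρs, hρ⟩⟩, _, hf.pred hs hρs hρ0⟩,
      Subtype.ext (hf.insertRoot_pred hρs hρ0)⟩

theorem IsForest.card_isIncreasingLabeling_mul_forestFactorial (hF : IsForest s p) :
    Nat.card {f // IsIncreasingLabeling s p f} * forestFactorial s p = (#s)! := by
  induction hN : #s generalizing s p with
  | zero =>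
    obtain rfl := card_eq_zero.1 hN
    have : Nat.card {f // IsIncreasingLabeling (∅ : Finset α) p f} = 1 :=
      Nat.card_eq_one_iff_exists.2 ⟨⟨0, ⟨fun _ _ => rfl, by simp, by simp, by simp⟩⟩,
        fun ⟨f, hf⟩ => Subtype.ext (funext fun j => hf.eq_zero_of_notMem j (notMem_empty j))⟩
    simp [this, forestFactorial]
  | succ N ih =>
    have hroot : ∀ ρ ∈ {ρ ∈ s | IsFixedPt p ρ},
        Nat.card {f // IsIncreasingLabeling (s.erase ρ) (deleteRoot p ρ) f} * forestFactorial s p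
          = N ! * #(subtree s p ρ) := by
      intro ρ hρ
      obtain ⟨hρs, hρ⟩ := mem_filter.1 hρ
      rw [forestFactorial_eq_mul hρ hρs, mul_left_comm,
        ih hF.erase_deleteRoot (by rw [card_erase_of_mem hρs, hN, Nat.add_sub_cancel]), mul_comm]
    rw [card_isIncreasingLabeling_eq_sum hF.mapsTo (card_pos.1 (hN ▸ N.succ_pos)), sum_mul,
      sum_congr rfl hroot, ← mul_sum, hF.sum_card_subtree, hN, Nat.factorial_succ, mul_comm]

end Forest

abbrev RTree (n : ℕ) := {rp : Fin n × (Fin n → Fin n) // IsRTree n rp}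

namespace RTree

variable {n : ℕ}

theorem isRTree_conj (e : Perm (Fin n)) (T : RTree n) :
    IsRTree n (e T.1.1, e ∘ T.1.2 ∘ e.symm) := by
  have hconj : Semiconj e T.1.2 (e ∘ T.1.2 ∘ e.symm) := fun x => by simp
  refine ⟨by simp [T.2.1], fun j => ?_⟩
  obtain ⟨k, hk⟩ := T.2.2 (e.symm j)
  exact ⟨k, by simpa [hk] using ((hconj.iterate_right k).eq (e.symm j)).symm⟩

instance : MulAction (Perm (Fin n)) (RTree n) where
  smul e T := ⟨(e T.1.1, e ∘ T.1.2 ∘ e.symm), isRTree_conj e T⟩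
  one_smul _ := rfl
  mul_smul _ _ _ := rfl

theorem smul_val (e : Perm (Fin n)) (T : RTree n) :
    (e • T).1 = (e T.1.1, e ∘ T.1.2 ∘ e.symm) :=
  rfl

theorem smul_eq_iff (e : Perm (Fin n)) (T T' : RTree n) :
    e • T = T' ↔ e T.1.1 = T'.1.1 ∧ ∀ i, e (T.1.2 i) = T'.1.2 (e i) := by
  refine ⟨fun h => h ▸ ⟨rfl, fun i => by simp [smul_val]⟩, fun ⟨hroot, hpar⟩ => ?_⟩
  refine Subtype.ext (Prod.ext hroot (funext fun j => ?_))
  simpa [smul_val] using hpar (e.symm j)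

theorem treeRel_iff_mem_orbit (T T' : RTree n) :
    TreeRel n T T' ↔ T' ∈ orbit (Perm (Fin n)) T := by
  simp only [mem_orbit_iff, smul_eq_iff]
  rfl

theorem mk_eq_mk_iff (T T' : RTree n) :
    Quot.mk (TreeRel n) T = Quot.mk (TreeRel n) T' ↔ T' ∈ orbit (Perm (Fin n)) T := by
  have hrel : TreeRel n = orbitRel (Perm (Fin n)) (RTree n) := by
    ext T T'
    rw [treeRel_iff_mem_orbit, orbitRel_apply, mem_orbit_symm]
  rw [Quot.eq, hrel, (orbitRel _ _).iseqv.eqvGen_iff, orbitRel_apply, mem_orbit_symm]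

def IsIncreasing (T : RTree n) : Prop :=
  ∀ j : Fin n, j ≠ T.1.1 → T.1.2 j < j

theorem eq_root_of_isFixedPt (T : RTree n) {j : Fin n} (hj : IsFixedPt T.1.2 j) :
    j = T.1.1 := by
  obtain ⟨k, hk⟩ := T.2.2 j
  rwa [iterate_fixed hj] at hk

theorem isForest (T : RTree n) : IsForest univ T.1.2 where
  mapsTo _ _ := mem_coe.2 (mem_univ _)
  exists_isFixedPt j _ := by
    obtain ⟨k, hk⟩ := T.2.2 j
    exact ⟨k, hk ▸ T.2.1⟩

theorem isIncreasing_smul_iff (e : Perm (Fin n)) (T : RTree n) :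
    (e • T).IsIncreasing ↔ ∀ j, T.1.2 j ≠ j → e (T.1.2 j) < e j := by
  refine ⟨fun h j hj => ?_, fun h j hj => ?_⟩
  · simpa [smul_val] using h (e j) fun hjr => hj (e.injective hjr ▸ T.2.1)
  · have := h (e.symm j) fun hfix => hj (by simp [smul_val, ← eq_root_of_isFixedPt T hfix])
    simpa [smul_val] using this

theorem treeFactorial_eq_forestFactorial (rp : Fin n × (Fin n → Fin n)) :
    treeFactorial n rp = forestFactorial univ rp.2 := by
  classical
  refine prod_congr rfl fun j _ => ?_
  rw [cardAbove, Nat.card_eq_fintype_card, Fintype.card_subtype]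
  rfl

theorem card_isIncreasing_smul_mul_treeFactorial (T : RTree n) :
    Nat.card {e : Perm (Fin n) // (e • T).IsIncreasing} * treeFactorial n T.1 = n ! := by
  rw [treeFactorial_eq_forestFactorial,
    Nat.card_congr (subtypeEquivRight (isIncreasing_smul_iff · T)),
    card_perm_lt_eq_card_isIncreasingLabeling,
    T.isForest.card_isIncreasingLabeling_mul_forestFactorial, card_univ, Fintype.card_fin]

end RTree

theorem stmt6_general (n : ℕ) (τ : UTree n) :
    Nat.card {T : {rp : Fin n × (Fin n → Fin n) // IsRTree n rp} // Quot.mk (TreeRel n) T = τ}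
      = treeFactorial n τ.out.val *
        Nat.card {T : {rp : Fin n × (Fin n → Fin n) // IsRTree n rp} //
          (∀ j : Fin n, j ≠ T.val.1 → T.val.2 j < j) ∧ Quot.mk (TreeRel n) T = τ} := by
  set T₀ : RTree n := τ.out
  change Nat.card {T : RTree n // Quot.mk (TreeRel n) T = τ} =
    treeFactorial n T₀.1 * Nat.card {T : RTree n // T.IsIncreasing ∧ Quot.mk (TreeRel n) T = τ}
  have horbit (T : RTree n) : Quot.mk (TreeRel n) T = τ ↔ T ∈ orbit (Perm (Fin n)) T₀ := by
    rw [← Quot.out_eq τ, RTree.mk_eq_mk_iff, mem_orbit_symm]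
  have hr : Nat.card (orbit (Perm (Fin n)) T₀) =
      Nat.card {T : RTree n // Quot.mk (TreeRel n) T = τ} :=
    Nat.card_congr (subtypeEquivRight fun T => (horbit T).symm)
  have hi : Nat.card {T : orbit (Perm (Fin n)) T₀ // (T : RTree n) ∈ {T | T.IsIncreasing}} =
      Nat.card {T : RTree n // T.IsIncreasing ∧ Quot.mk (TreeRel n) T = τ} :=
    Nat.card_congr ((subtypeSubtypeEquivSubtypeInter _ _).trans
      (subtypeEquivRight fun T => by rw [horbit, and_comm]; rfl))
  have hS := RTree.card_isIncreasing_smul_mul_treeFactorial T₀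
  have hcount := card_orbit_mul_card_smul_mem (G := Perm (Fin n)) T₀ {T | T.IsIncreasing}
  rw [hr, hi, Nat.card_perm, Nat.card_fin, ← hS] at hcount
  refine Nat.eq_of_mul_eq_mul_right (Nat.pos_of_mul_pos_right (hS ▸ n.factorial_pos)) ?_
  exact hcount.trans (by ring)

/-- For an unlabeled rooted tree `τ` with `n` vertices, the number `r(τ)` of labeled rooted
trees on `Fin n` of isomorphism type `τ` equals the tree factorial `τ!` times the number
`i(τ)` of increasing rooted trees (parent strictly decreasing) of type `τ`. -/
theorem stmt6 (n : ℕ) (hn : 1 ≤ n) (τ : UTree n) :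
    Nat.card {T : {rp : Fin n × (Fin n → Fin n) // IsRTree n rp} // Quot.mk (TreeRel n) T = τ}
      = treeFactorial n τ.out.val *
        Nat.card {T : {rp : Fin n × (Fin n → Fin n) // IsRTree n rp} //
          (∀ j : Fin n, j ≠ T.val.1 → T.val.2 j < j) ∧ Quot.mk (TreeRel n) T = τ} :=
  stmt6_general n τ
end

section
/- For any rooted tree T with n vertices, the sum over all rooted subtrees T₀ of T (including the empty subtree and T itself) of the tree binomial coefficient C(T, T₀) = T!/(T₀! · ∏_{T' ∈ T∖T₀} T'!) equals 2^n. -/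
/-!
Order the vertices so that `x ≤ i` when `i` is an ancestor of `x`. For a down-closed set `D`
of vertices (a forest) let `P_D(X) = ∑_S C(D, S) X^|S|`, summed over the rooted subforests `S`
of `D`. If `D` is the disjoint union of two down-closed sets, `P_D` is the product of their
polynomials. If `T` is the subtree below a vertex `m`, every nonempty rooted subtree `S` of `T`
contains `m` and `|S| · C(T, S) = |T| · C(T ∖ m, S ∖ m)`, so `P_T' = |T| · P_{T ∖ m}`; together
with `P_T(0) = 1` this gives `P_D = (X + 1)^|D|` by induction on `|D|`. Evaluate at `X = 1`.
-/

open Finset Polynomial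

lemma Function.iterate_comparable {β : Type*} (f : β → β) {x i j : β} {k l : ℕ}
    (hk : f^[k] x = i) (hl : f^[l] x = j) : (∃ d, f^[d] i = j) ∨ ∃ d, f^[d] j = i := by
  rcases le_total k l with hkl | hlk
  · exact Or.inl ⟨l - k, by rw [← hk, ← Function.iterate_add_apply, Nat.sub_add_cancel hkl, hl]⟩
  · exact Or.inr ⟨k - l, by rw [← hl, ← Function.iterate_add_apply, Nat.sub_add_cancel hlk, hk]⟩

theorem Polynomial.eq_of_derivative_eq_of_eval_zero_eq {R : Type*} [Ring R] [IsAddTorsionFree R]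
    {p q : R[X]} (hd : derivative p = derivative q) (h0 : p.eval 0 = q.eval 0) : p = q := by
  have h := eq_C_of_derivative_eq_zero (p := p - q) (by rw [derivative_sub, hd, sub_self])
  rwa [coeff_zero_eq_eval_zero, eval_sub, h0, sub_self, C_0, sub_eq_zero] at h

namespace Forest

variable {α : Type*} [PartialOrder α]

def IsAncestorClosed (D S : Finset α) : Prop := ∀ i ∈ S, ∀ j ∈ D, i ≤ j → j ∈ S

open Classical in
noncomputable def rootedSubsets (D : Finset α) : Finset (Finset α) :=
  D.powerset.filter (IsAncestorClosed D)

lemma mem_rootedSubsets {D S : Finset α} :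
    S ∈ rootedSubsets D ↔ S ⊆ D ∧ IsAncestorClosed D S := by
  simp [rootedSubsets]

lemma empty_mem_rootedSubsets (D : Finset α) : ∅ ∈ rootedSubsets D :=
  mem_rootedSubsets.2 ⟨empty_subset D, fun _ hi => (notMem_empty _ hi).elim⟩

lemma inter_mem_rootedSubsets [DecidableEq α] {A D S : Finset α} (hS : S ∈ rootedSubsets D)
    (hA : A ⊆ D) : S ∩ A ∈ rootedSubsets A := by
  obtain ⟨-, hS⟩ := mem_rootedSubsets.1 hS
  exact mem_rootedSubsets.2 ⟨inter_subset_right, fun i hi j hj hij =>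
    mem_inter.2 ⟨hS i (mem_inter.1 hi).1 j (hA hj) hij, hj⟩⟩

lemma erase_mem_rootedSubsets_erase [DecidableEq α] {D S : Finset α} (hS : S ∈ rootedSubsets D)
    (m : α) : S.erase m ∈ rootedSubsets (D.erase m) := by
  obtain ⟨hsub, hS⟩ := mem_rootedSubsets.1 hS
  refine mem_rootedSubsets.2 ⟨erase_subset_erase m hsub, fun i hi j hj hij => ?_⟩
  obtain ⟨hjm, hjD⟩ := mem_erase.1 hj
  exact mem_erase.2 ⟨hjm, hS i (mem_of_mem_erase hi) j hjD hij⟩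

lemma union_mem_rootedSubsets_union [DecidableEq α] {A B S₁ S₂ : Finset α}
    (hA : IsLowerSet (A : Set α)) (hB : IsLowerSet (B : Set α)) (hAB : Disjoint A B)
    (h₁ : S₁ ∈ rootedSubsets A) (h₂ : S₂ ∈ rootedSubsets B) :
    S₁ ∪ S₂ ∈ rootedSubsets (A ∪ B) := by
  rw [mem_rootedSubsets] at h₁ h₂ ⊢
  refine ⟨union_subset_union h₁.1 h₂.1, fun i hi j hj hij => ?_⟩
  rcases mem_union.1 hi with hi | hi <;> rcases mem_union.1 hj with hj | hj
  · exact mem_union_left _ (h₁.2 i hi j hj hij)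
  · exact absurd (hB hij hj) (disjoint_left.1 hAB (h₁.1 hi))
  · exact absurd (hA hij hj) (disjoint_right.1 hAB (h₂.1 hi))
  · exact mem_union_right _ (h₂.2 i hi j hj hij)

variable [Fintype α]

open Classical in
noncomputable def subtree (i : α) : Finset α := univ.filter (· ≤ i)

@[simp] lemma mem_subtree {x i : α} : x ∈ subtree i ↔ x ≤ i := by
  simp [subtree]

@[simp] lemma coe_subtree (i : α) : (subtree i : Set α) = Set.Iic i := by
  ext; simp

lemma subtree_subset_of_isLowerSet {A : Finset α} (hA : IsLowerSet (A : Set α)) {i : α}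
    (hi : i ∈ A) : subtree i ⊆ A := by
  rw [← coe_subset, coe_subtree]
  exact hA.Iic_subset hi

lemma mem_of_mem_rootedSubsets_subtree {m : α} {S : Finset α}
    (hS : S ∈ rootedSubsets (subtree m)) (hne : S ≠ ∅) : m ∈ S := by
  obtain ⟨hsub, hS⟩ := mem_rootedSubsets.1 hS
  obtain ⟨x, hx⟩ := nonempty_iff_ne_empty.2 hne
  exact hS x hx m (mem_subtree.2 le_rfl) (mem_subtree.1 (hsub hx))

variable [DecidableEq α]

/-- For a rooted subforest `S` of a down-closed `D` this is `D! / (S! · ∏_{T' ∈ D ∖ S} T'!)`,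
after cancelling the factors `|T_j|` with `j ∉ S`. -/
noncomputable def treeBinomial (S : Finset α) : ℚ :=
  ∏ i ∈ S, (#(subtree i) : ℚ) / #(subtree i ∩ S)

noncomputable def treeBinomialPoly (D : Finset α) : ℚ[X] :=
  ∑ S ∈ rootedSubsets D, C (treeBinomial S) * X ^ #S

lemma eval_zero_treeBinomialPoly (D : Finset α) : (treeBinomialPoly D).eval 0 = 1 := by
  rw [treeBinomialPoly, eval_finsetSum, sum_eq_single_of_mem ∅ (empty_mem_rootedSubsets D)]
  · simp [treeBinomial]
  · intro S _ hS
    simp [(nonempty_iff_ne_empty.2 hS).card_pos.ne']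

section Union

variable {A B : Finset α} (hA : IsLowerSet (A : Set α)) (hB : IsLowerSet (B : Set α))
  (hAB : Disjoint A B)
include hA

lemma treeBinomial_inter_of_isLowerSet (S : Finset α) :
    treeBinomial (S ∩ A) = ∏ i ∈ S ∩ A, (#(subtree i) : ℚ) / #(subtree i ∩ S) := by
  refine prod_congr rfl fun i hi => ?_
  rw [← inter_assoc, inter_eq_left.2
    (inter_subset_left.trans (subtree_subset_of_isLowerSet hA (mem_inter.1 hi).2))]

include hB hAB

lemma treeBinomial_eq_mul_of_subset_union {S : Finset α} (hS : S ⊆ A ∪ B) :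
    treeBinomial S = treeBinomial (S ∩ A) * treeBinomial (S ∩ B) := by
  rw [treeBinomial_inter_of_isLowerSet hA, treeBinomial_inter_of_isLowerSet hB,
    ← prod_union (disjoint_of_subset_left inter_subset_right
      (disjoint_of_subset_right inter_subset_right hAB)),
    ← inter_union_distrib_left, inter_eq_left.2 hS, treeBinomial]

lemma treeBinomialPoly_union :
    treeBinomialPoly (A ∪ B) = treeBinomialPoly A * treeBinomialPoly B := by
  rw [treeBinomialPoly, treeBinomialPoly, treeBinomialPoly, sum_mul_sum, ← sum_product']
  refine sum_nbij' (fun S => (S ∩ A, S ∩ B)) (fun P => P.1 ∪ P.2) (fun S hS => ?_)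
    (fun P hP => ?_) (fun S hS => ?_) (fun P hP => ?_) (fun S hS => ?_)
  · exact mem_product.2 ⟨inter_mem_rootedSubsets hS subset_union_left,
      inter_mem_rootedSubsets hS subset_union_right⟩
  · exact union_mem_rootedSubsets_union hA hB hAB (mem_product.1 hP).1 (mem_product.1 hP).2
  · simp [← inter_union_distrib_left, inter_eq_left.2 (mem_rootedSubsets.1 hS).1]
  · obtain ⟨h₁, h₂⟩ := mem_product.1 hP
    have h₁ := (mem_rootedSubsets.1 h₁).1
    have h₂ := (mem_rootedSubsets.1 h₂).1
    simp only [union_inter_distrib_right, inter_eq_left.2 h₁, inter_eq_left.2 h₂,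
      disjoint_iff_inter_eq_empty.1 (disjoint_of_subset_left h₁ hAB),
      disjoint_iff_inter_eq_empty.1 (disjoint_of_subset_left h₂ hAB.symm), union_empty,
      empty_union]
  · have hS := (mem_rootedSubsets.1 hS).1
    have hcard : #S = #(S ∩ A) + #(S ∩ B) := by
      rw [← card_union_of_disjoint (disjoint_of_subset_left inter_subset_right
        (disjoint_of_subset_right inter_subset_right hAB)), ← inter_union_distrib_left,
        inter_eq_left.2 hS]
    rw [treeBinomial_eq_mul_of_subset_union hA hB hAB hS, hcard, C_mul, pow_add]
    ring

end Union

section Subtree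

variable {m : α}

lemma card_mul_treeBinomial {S : Finset α} (hm : m ∈ S) (hS : S ⊆ subtree m) :
    #S * treeBinomial S = #(subtree m) * treeBinomial (S.erase m) := by
  have hrest : ∏ i ∈ S.erase m, (#(subtree i) : ℚ) / #(subtree i ∩ S)
      = treeBinomial (S.erase m) := by
    refine prod_congr rfl fun i hi => ?_
    obtain ⟨hne, hiS⟩ := mem_erase.1 hi
    have hmi : m ∉ subtree i ∩ S := fun h =>
      hne (le_antisymm (mem_subtree.1 (hS hiS)) (mem_subtree.1 (mem_inter.1 h).1))
    rw [inter_erase, erase_eq_of_notMem hmi]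
  have hS0 : (#S : ℚ) ≠ 0 := by exact_mod_cast (card_pos.2 ⟨m, hm⟩).ne'
  rw [treeBinomial, ← mul_prod_erase S _ hm, inter_eq_right.2 hS, hrest]
  field_simp

lemma insert_mem_rootedSubsets_subtree {S : Finset α}
    (hS : S ∈ rootedSubsets ((subtree m).erase m)) : insert m S ∈ rootedSubsets (subtree m) := by
  obtain ⟨hsub, hS⟩ := mem_rootedSubsets.1 hS
  refine mem_rootedSubsets.2 ⟨insert_subset (mem_subtree.2 le_rfl)
    (hsub.trans (erase_subset m _)), fun i hi j hj hij => ?_⟩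
  by_cases hjm : j = m
  · exact hjm ▸ mem_insert_self m S
  rcases mem_insert.1 hi with rfl | hi
  · exact absurd (le_antisymm (mem_subtree.1 hj) hij) hjm
  · exact mem_insert_of_mem (hS i hi j (mem_erase.2 ⟨hjm, hj⟩) hij)

lemma derivative_treeBinomialPoly_subtree (m : α) :
    derivative (treeBinomialPoly (subtree m))
      = C (#(subtree m) : ℚ) * treeBinomialPoly ((subtree m).erase m) := by
  rw [treeBinomialPoly, derivative_sum, ← sum_erase _ (a := ∅) (by simp), treeBinomialPoly,
    mul_sum]
  refine sum_nbij' (fun S => S.erase m) (insert m) (fun S hS => ?_) (fun S hS => ?_)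
    (fun S hS => ?_) (fun S hS => ?_) (fun S hS => ?_)
  · exact erase_mem_rootedSubsets_erase (mem_of_mem_erase hS) m
  · exact mem_erase.2 ⟨insert_ne_empty m S, insert_mem_rootedSubsets_subtree hS⟩
  · obtain ⟨hne, hS⟩ := mem_erase.1 hS
    exact insert_erase (mem_of_mem_rootedSubsets_subtree hS hne)
  · exact erase_insert fun hm => (mem_erase.1 ((mem_rootedSubsets.1 hS).1 hm)).1 rfl
  · obtain ⟨hne, hS⟩ := mem_erase.1 hS
    have hm := mem_of_mem_rootedSubsets_subtree hS hne
    rw [derivative_C_mul_X_pow, mul_comm (treeBinomial S),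
      card_mul_treeBinomial hm (mem_rootedSubsets.1 hS).1, C_mul, card_erase_of_mem hm, mul_assoc]

lemma treeBinomialPoly_subtree
    (h : treeBinomialPoly ((subtree m).erase m) = (X + 1) ^ (#(subtree m) - 1)) :
    treeBinomialPoly (subtree m) = (X + 1) ^ #(subtree m) := by
  refine eq_of_derivative_eq_of_eval_zero_eq ?_ (by simp [eval_zero_treeBinomialPoly])
  rw [derivative_treeBinomialPoly_subtree, h, derivative_pow]
  simp

end Subtree

lemma isLowerSet_sdiff_subtree (hchain : ∀ x : α, IsChain (· ≤ ·) (Set.Ici x)) {D : Finset α}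
    (hD : IsLowerSet (D : Set α)) {m : α} (hm : Maximal (· ∈ D) m) :
    IsLowerSet ((D \ subtree m : Finset α) : Set α) := by
  intro x y hyx hx
  simp only [coe_sdiff, Set.mem_sdiff, mem_coe, mem_subtree] at hx ⊢
  refine ⟨hD hyx hx.1, fun hym => hx.2 ?_⟩
  rcases (hchain y).total hyx hym with hxm | hmx
  · exact hxm
  · exact hm.2 hx.1 hmx

theorem treeBinomialPoly_eq_pow (hchain : ∀ x : α, IsChain (· ≤ ·) (Set.Ici x))
    (D : Finset α) (hD : IsLowerSet (D : Set α)) : treeBinomialPoly D = (X + 1) ^ #D := by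
  induction D using Finset.strongInduction with
  | H D ih =>
  rcases D.eq_empty_or_nonempty with rfl | hne
  · simp [treeBinomialPoly, rootedSubsets, IsAncestorClosed, treeBinomial, filter_singleton]
  obtain ⟨m, hm⟩ := D.exists_maximal hne
  have hmm : m ∈ subtree m := mem_subtree.2 le_rfl
  have hTD : subtree m ⊆ D := subtree_subset_of_isLowerSet hD hm.1
  have hT : treeBinomialPoly (subtree m) = (X + 1) ^ #(subtree m) := by
    refine treeBinomialPoly_subtree ?_
    rw [ih _ ((erase_ssubset hmm).trans_subset hTD) (by simp [isLowerSet_Iio]),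
      card_erase_of_mem hmm]
  have hR : treeBinomialPoly (D \ subtree m) = (X + 1) ^ #(D \ subtree m) :=
    ih _ (sdiff_ssubset hTD ⟨m, hmm⟩) (isLowerSet_sdiff_subtree hchain hD hm)
  rw [← union_sdiff_of_subset hTD, treeBinomialPoly_union (by simp [isLowerSet_Iic])
    (isLowerSet_sdiff_subtree hchain hD hm) disjoint_sdiff, hT, hR, ← pow_add,
    card_union_of_disjoint disjoint_sdiff]

theorem sum_treeBinomial_rootedSubsets_univ (hchain : ∀ x : α, IsChain (· ≤ ·) (Set.Ici x)) :
    ∑ S ∈ rootedSubsets (univ : Finset α), treeBinomial S = 2 ^ Fintype.card α := by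
  have h := congrArg (eval 1)
    (treeBinomialPoly_eq_pow hchain univ (by simp [isLowerSet_univ]))
  rw [treeBinomialPoly, eval_finsetSum] at h
  simpa [one_add_one_eq_two] using h

end Forest

namespace IsRTree

open Forest

variable {n : ℕ} {rp : Fin n × (Fin n → Fin n)}

lemma eq_root_of_isPeriodicPt (h : IsRTree n rp) {i : Fin n} {k : ℕ}
    (hi : Function.IsPeriodicPt rp.2 k i) (hk : 0 < k) : i = rp.1 := by
  obtain ⟨d, hd⟩ := h.2 i
  have hdk : k * d - d + d = k * d := Nat.sub_add_cancel (Nat.le_mul_of_pos_left d hk)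
  rw [← (hi.mul_const d).eq, ← hdk, Function.iterate_add_apply, hd, Function.iterate_fixed h.1]

lemma eq_of_iterate_eq (h : IsRTree n rp) {i j : Fin n} {k l : ℕ} (hk : rp.2^[k] i = j)
    (hl : rp.2^[l] j = i) : i = j := by
  rcases Nat.eq_zero_or_pos k with rfl | hk0
  · exact hk
  have hi : Function.IsPeriodicPt rp.2 (l + k) i := by
    rw [Function.IsPeriodicPt, Function.IsFixedPt, Function.iterate_add_apply, hk, hl]
  rw [← hk, h.eq_root_of_isPeriodicPt hi (by omega), Function.iterate_fixed h.1]

/-- The vertices of a rooted tree, ordered so that `x ≤ i` when `i` is an ancestor of `x`;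
then `subtree i` is the subtree rooted at `i`. -/
def Vertex (_ : IsRTree n rp) : Type := Fin n

variable (h : IsRTree n rp)

instance : Fintype h.Vertex := inferInstanceAs (Fintype (Fin n))

instance : DecidableEq h.Vertex := inferInstanceAs (DecidableEq (Fin n))

instance : PartialOrder h.Vertex where
  le x i := ∃ k, rp.2^[k] x = i
  le_refl _ := ⟨0, rfl⟩
  le_trans x _ _ := fun ⟨k, hk⟩ ⟨l, hl⟩ =>
    ⟨l + k, (Function.iterate_add_apply rp.2 l k x).trans (by rw [hk, hl])⟩
  le_antisymm _ _ := fun ⟨_, hk⟩ ⟨_, hl⟩ => h.eq_of_iterate_eq hk hl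

lemma isChain_Ici (x : h.Vertex) : IsChain (· ≤ ·) (Set.Ici x) :=
  fun _ ⟨_, hk⟩ _ ⟨_, hl⟩ _ => Function.iterate_comparable rp.2 hk hl

lemma isAncestorClosed_univ_iff (S : Finset (Fin n)) :
    IsAncestorClosed (α := h.Vertex) univ S ↔
      S = ∅ ∨ (rp.1 ∈ S ∧ ∀ i ∈ S, i ≠ rp.1 → rp.2 i ∈ S) := by
  constructor
  · intro hS
    refine (eq_empty_or_nonempty S).imp_right fun ⟨x, hx⟩ => ?_
    exact ⟨hS x hx rp.1 (mem_univ _) (h.2 x), fun i hi _ => hS i hi _ (mem_univ _) ⟨1, rfl⟩⟩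
  · rintro (rfl | ⟨hr, hcl⟩)
    · exact fun _ hi => (notMem_empty _ hi).elim
    have hparent : ∀ i ∈ S, rp.2 i ∈ S := fun i hi => by
      by_cases hir : i = rp.1
      · rwa [hir, h.1]
      · exact hcl i hi hir
    rintro i hi _ - ⟨k, rfl⟩
    induction k with
    | zero => exact hi
    | succ k ih => exact Function.iterate_succ_apply' rp.2 k i ▸ hparent _ ih

lemma filter_eq_rootedSubsets_univ :
    univ.filter (fun S : Finset (Fin n) => S = ∅ ∨ (rp.1 ∈ S ∧ ∀ i ∈ S, i ≠ rp.1 → rp.2 i ∈ S))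
      = rootedSubsets (univ : Finset h.Vertex) := by
  ext S
  rw [mem_filter, ← h.isAncestorClosed_univ_iff]
  exact ⟨fun hS => mem_rootedSubsets.2 ⟨subset_univ _, hS.2⟩,
    fun hS => ⟨mem_univ _, (mem_rootedSubsets.1 hS).2⟩⟩

lemma card_subtree (j : Fin n) : #(subtree (α := h.Vertex) j) = cardAbove n rp j :=
  (Nat.card_eq_finsetCard _).symm.trans
    (Nat.card_congr (Equiv.subtypeEquivRight fun _ => mem_subtree))

lemma card_subtree_inter (i : Fin n) (S : Finset (Fin n)) :
    #(subtree (α := h.Vertex) i ∩ S)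
      = Nat.card {x : Fin n // x ∈ S ∧ ∃ k : ℕ, rp.2^[k] x = i} :=
  (Nat.card_eq_finsetCard _).symm.trans (Nat.card_congr (Equiv.subtypeEquivRight fun _ =>
    mem_inter.trans (and_comm.trans (and_congr_right fun _ => mem_subtree (α := h.Vertex)))))

lemma treeBinomial_eq (S : Finset (Fin n)) :
    treeBinomial (α := h.Vertex) S = (∏ j : Fin n, (cardAbove n rp j : ℚ)) /
        ((∏ i ∈ S, (Nat.card {x : Fin n // x ∈ S ∧ ∃ k : ℕ, rp.2^[k] x = i} : ℚ)) *
          ∏ j ∈ Sᶜ, (cardAbove n rp j : ℚ)) := by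
  have hcompl : ∏ j ∈ Sᶜ, (cardAbove n rp j : ℚ) ≠ 0 := prod_ne_zero_iff.2 fun j _ => by
    rw [← h.card_subtree]
    exact_mod_cast (card_pos.2 ⟨j, (mem_subtree (α := h.Vertex)).2 le_rfl⟩).ne'
  rw [← prod_mul_prod_compl S, mul_div_mul_right _ _ hcompl, ← prod_div_distrib]
  exact prod_congr rfl fun i _ => by rw [← h.card_subtree i, ← h.card_subtree_inter i S]

end IsRTree

/-- With `S` the vertex set of `T₀`: `T! = ∏_j |T_j|`, `T₀! = ∏_{i ∈ S} |T_i ∩ S|`, and the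
difference forest contributes `∏_{j ∉ S} |T_j|` once the factors of its non-root vertices are
cancelled. -/
theorem stmt8_general (n : ℕ) (rp : Fin n × (Fin n → Fin n)) (h : IsRTree n rp) :
    ∑ S ∈ Finset.univ.filter (fun S : Finset (Fin n) =>
        S = ∅ ∨ (rp.1 ∈ S ∧ ∀ i ∈ S, i ≠ rp.1 → rp.2 i ∈ S)),
      ((∏ j : Fin n, (cardAbove n rp j : ℚ)) /
        ((∏ i ∈ S, (Nat.card {x : Fin n // x ∈ S ∧ ∃ k : ℕ, rp.2^[k] x = i} : ℚ)) *
          ∏ j ∈ Sᶜ, (cardAbove n rp j : ℚ)))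
      = 2 ^ n := by
  rw [h.filter_eq_rootedSubsets_univ]
  calc _ = ∑ S ∈ Forest.rootedSubsets (Finset.univ : Finset h.Vertex), Forest.treeBinomial S :=
        Finset.sum_congr rfl fun S _ => (h.treeBinomial_eq S).symm
    _ = 2 ^ Fintype.card h.Vertex := Forest.sum_treeBinomial_rootedSubsets_univ h.isChain_Ici
    _ = 2 ^ n := congrArg (2 ^ ·) (Fintype.card_fin n)

/-- For a rooted tree `T` on `n` vertices, the sum over all rooted subtrees `T₀` (subsets
containing the root and closed under parents, together with the empty subtree) of the tree
binomial coefficient `T!/(T₀! · ∏_{T' ∈ T∖T₀} T'!)` equals `2^n`.  Here `T! = ∏_j |T_j|`;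
for a rooted subtree with vertex set `S`, `T₀! = ∏_{i∈S} |T_i ∩ S|`, and the trees of the
difference forest are the subtrees `T_j` for `j ∉ S`, giving
`∏_{T'∈T∖T₀} T'! = ∏_{j∉S} |T_j|` (after cancelation of the non-root factors). -/
theorem stmt8 (n : ℕ) (hn : 1 ≤ n) (rp : Fin n × (Fin n → Fin n)) (h : IsRTree n rp) :
    ∑ S ∈ Finset.univ.filter (fun S : Finset (Fin n) =>
        S = ∅ ∨ (rp.1 ∈ S ∧ ∀ i ∈ S, i ≠ rp.1 → rp.2 i ∈ S)),
      ((∏ j : Fin n, (cardAbove n rp j : ℚ)) /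
        ((∏ i ∈ S, (Nat.card {x : Fin n // x ∈ S ∧ ∃ k : ℕ, rp.2^[k] x = i} : ℚ)) *
          ∏ j ∈ Sᶜ, (cardAbove n rp j : ℚ)))
      = 2 ^ n :=
  stmt8_general n rp h
end

section
/- Let β(x) be a formal power series and consider the fixed point equation x = g + t·β(x). Its unique formal power series solution in t with constant term g is x = g + Σ_{n≥1} (t^n/n!) f_n(g), where f_n(g) = (d/dg)^{n-1} [β(g)^n]. -/
/-!
Write `D = d/dt` and `E = d/dg`, the latter applied coefficientwise. Differentiating
`x = g + t β(x)` in both variables gives `(1 - t β'(x)) D x = β(x)` and `(1 - t β'(x)) E x = 1`,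
hence `D x = β(x) E x`. As `D` and `E` commute, this propagates to
`D (h(x) E x) = E ((β h)(x) E x)` for every polynomial `h`, and iterating gives
`D^(n+1) x = E^n (β(x)^(n+1) E x)`. At `t = 0` we have `x = g` and `E x = 1`, so comparing
constant terms yields `(n+1)! [t^(n+1)] x = (d/dg)^n β(g)^(n+1)`.
Existence and uniqueness hold because `y ↦ g + t β(y)` raises the `t`-adic order of differences.
-/

open scoped Polynomial PowerSeries

namespace PowerSeries

variable {R : Type*} [CommRing R]

theorem eq_of_forall_X_pow_dvd_sub {f g : R⟦X⟧} (h : ∀ n, X ^ n ∣ f - g) : f = g := by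
  ext n
  have := X_pow_dvd_iff.mp (h (n + 1)) n n.lt_succ_self
  rwa [map_sub, sub_eq_zero] at this

variable {Φ : R⟦X⟧ → R⟦X⟧} (hΦ : ∀ n f g, X ^ n ∣ f - g → X ^ (n + 1) ∣ Φ f - Φ g)
include hΦ

theorem X_pow_dvd_iterate_sub (n : ℕ) (f g : R⟦X⟧) : X ^ n ∣ Φ^[n] f - Φ^[n] g := by
  induction n with
  | zero => simp
  | succ n ih =>
    rw [Function.iterate_succ_apply', Function.iterate_succ_apply']
    exact hΦ n _ _ ih

/-- The fixed point is the limit of the iterates `Φ^[n] 0`, whose `n`-th coefficient is already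
stable from step `n + 1` on. -/
theorem existsUnique_isFixedPt_of_X_pow_dvd : ∃! f, Function.IsFixedPt Φ f := by
  set s : R⟦X⟧ := mk fun n => coeff n (Φ^[n + 1] 0)
  have hs (n : ℕ) : X ^ n ∣ s - Φ^[n] 0 := by
    refine X_pow_dvd_iff.mpr fun m hm => ?_
    obtain ⟨k, rfl⟩ := Nat.exists_eq_add_of_lt hm
    have h := X_pow_dvd_iff.mp (X_pow_dvd_iterate_sub hΦ (m + 1) 0 (Φ^[k] 0)) m m.lt_succ_self
    rw [← Function.iterate_add_apply, map_sub, sub_eq_zero, Nat.add_right_comm] at h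
    rw [map_sub, sub_eq_zero]
    exact (coeff_mk _ _).trans h
  have hs_fixed : Function.IsFixedPt Φ s := eq_of_forall_X_pow_dvd_sub fun n => by
    cases n with
    | zero => simp
    | succ n =>
      have h := dvd_add (hΦ n _ _ (hs n)) (dvd_sub_comm.mp (hs (n + 1)))
      rwa [Function.iterate_succ_apply', sub_add_sub_cancel] at h
  refine ⟨s, hs_fixed, fun f hf => eq_of_forall_X_pow_dvd_sub fun n => ?_⟩
  simpa only [(hf.iterate n).eq, (hs_fixed.iterate n).eq] using X_pow_dvd_iterate_sub hΦ n f s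

end PowerSeries

namespace Derivation

section MapCoeffs

variable {R A : Type*} [CommSemiring R] [CommSemiring A] [Algebra R A]

noncomputable def mapCoeffsPowerSeries (d : Derivation R A A) : Derivation R A⟦X⟧ A⟦X⟧ where
  toFun f := PowerSeries.mk fun n => d (PowerSeries.coeff n f)
  map_add' f g := by ext; simp
  map_smul' r f := by ext; simp
  map_one_eq_zero' := by ext n; simp [PowerSeries.coeff_one, apply_ite d]
  leibniz' f g := by
    ext n
    simp only [LinearMap.coe_mk, AddHom.coe_mk, PowerSeries.coeff_mk, smul_eq_mul, map_add,
      mul_comm g, PowerSeries.coeff_mul, map_sum, leibniz, Finset.sum_add_distrib]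
    exact congrArg _ (Finset.sum_congr rfl fun _ _ => mul_comm _ _)

variable (d : Derivation R A A)

@[simp]
theorem coeff_mapCoeffsPowerSeries (f : A⟦X⟧) (n : ℕ) :
    PowerSeries.coeff n (d.mapCoeffsPowerSeries f) = d (PowerSeries.coeff n f) := by
  simp [mapCoeffsPowerSeries]

@[simp]
theorem mapCoeffsPowerSeries_C (a : A) :
    d.mapCoeffsPowerSeries (PowerSeries.C a) = PowerSeries.C (d a) := by
  ext n
  simp [PowerSeries.coeff_C, apply_ite d]

@[simp]
theorem mapCoeffsPowerSeries_X : d.mapCoeffsPowerSeries (PowerSeries.X : A⟦X⟧) = 0 := by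
  ext n
  simp [PowerSeries.coeff_X, apply_ite d]

@[simp]
theorem constantCoeff_mapCoeffsPowerSeries (f : A⟦X⟧) :
    PowerSeries.constantCoeff (d.mapCoeffsPowerSeries f) = d (PowerSeries.constantCoeff f) := by
  rw [← PowerSeries.coeff_zero_eq_constantCoeff_apply, coeff_mapCoeffsPowerSeries,
    PowerSeries.coeff_zero_eq_constantCoeff_apply]

theorem constantCoeff_iterate_mapCoeffsPowerSeries (f : A⟦X⟧) (n : ℕ) :
    PowerSeries.constantCoeff (d.mapCoeffsPowerSeries^[n] f) =
      d^[n] (PowerSeries.constantCoeff f) := by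
  induction n generalizing f with
  | zero => rfl
  | succ n ih =>
    rw [Function.iterate_succ_apply, ih, constantCoeff_mapCoeffsPowerSeries,
      Function.iterate_succ_apply]

theorem derivative_mapCoeffsPowerSeries (f : A⟦X⟧) :
    d⁄dX A (d.mapCoeffsPowerSeries f) = d.mapCoeffsPowerSeries (d⁄dX A f) := by
  ext n
  simp [PowerSeries.coeff_derivative, leibniz, mul_comm]

end MapCoeffs

section Commute

variable {R A : Type*} [CommSemiring R] [CommSemiring A] [Algebra R A] {D E : Derivation R A A}
  (hDE : ∀ a, D (E a) = E (D a)) {F : R[X]} {x : A} (hx : D x = Polynomial.aeval x F * E x)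
include hDE hx

theorem map_aeval_mul_of_commute (h : R[X]) :
    D (Polynomial.aeval x h * E x) = E (Polynomial.aeval x (F * h) * E x) := by
  simp only [leibniz, map_aeval, hDE, hx, smul_eq_mul, map_mul]
  ring

theorem iterate_map_aeval_mul_of_commute (m : ℕ) (h : R[X]) :
    D^[m] (Polynomial.aeval x h * E x) = E^[m] (Polynomial.aeval x (F ^ m * h) * E x) := by
  induction m generalizing h with
  | zero => simp
  | succ m ih =>
    rw [Function.iterate_succ_apply, map_aeval_mul_of_commute hDE hx,
      Function.Commute.iterate_left (f := D) hDE m, ih, ← Function.iterate_succ_apply' E,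
      pow_succ, mul_assoc]

theorem iterate_succ_apply_of_commute (m : ℕ) :
    D^[m + 1] x = E^[m] (Polynomial.aeval x (F ^ (m + 1)) * E x) := by
  rw [Function.iterate_succ_apply, hx, iterate_map_aeval_mul_of_commute hDE hx, pow_succ]

end Commute

end Derivation

namespace PowerSeries

variable {R A : Type*} [CommRing R] [CommRing A] [Algebra R A]

theorem sub_dvd_aeval_sub (f g : A⟦X⟧) (p : R[X]) :
    f - g ∣ Polynomial.aeval f p - Polynomial.aeval g p := by
  simpa only [Polynomial.eval_map_algebraMap] using
    Polynomial.sub_dvd_eval_sub f g (p.map (algebraMap R A⟦X⟧))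

theorem constantCoeff_aeval (f : A⟦X⟧) (p : R[X]) :
    constantCoeff (Polynomial.aeval f p) = Polynomial.aeval (constantCoeff f) p := by
  rw [Polynomial.aeval_def, Polynomial.aeval_def, Polynomial.hom_eval₂]
  rfl

theorem existsUnique_eq_C_add_X_mul_aeval (c : A) (β : R[X]) :
    ∃! x : A⟦X⟧, x = C c + X * Polynomial.aeval x β := by
  have hΦ (n : ℕ) (f g : A⟦X⟧) (h : X ^ n ∣ f - g) :
      X ^ (n + 1) ∣ (C c + X * Polynomial.aeval f β) - (C c + X * Polynomial.aeval g β) := by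
    rw [add_sub_add_left_eq_sub, ← mul_sub, pow_succ']
    exact mul_dvd_mul_left X (h.trans (sub_dvd_aeval_sub f g β))
  simpa only [Function.IsFixedPt, eq_comm] using existsUnique_isFixedPt_of_X_pow_dvd hΦ

variable {c : A} {β : R[X]} {x : A⟦X⟧} (hx : x = C c + X * Polynomial.aeval x β)
include hx

theorem constantCoeff_of_eq_C_add_X_mul_aeval : constantCoeff x = c := by
  rw [hx]
  simp

theorem derivative_eq_aeval_mul_mapCoeffsPowerSeries (d : Derivation R A A) (hc : d c = 1) :
    d⁄dX A x = Polynomial.aeval x β * d.mapCoeffsPowerSeries x := by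
  set D := (d⁄dX A).restrictScalars R
  set E := d.mapCoeffsPowerSeries
  change D x = _
  set u := 1 - X * Polynomial.aeval x (Polynomial.derivative β)
  have hD : u * D x = Polynomial.aeval x β := by
    have h := congrArg D hx
    rw [map_add, Derivation.leibniz, Derivation.map_aeval] at h
    simp only [D, Derivation.restrictScalars_apply, derivative_C, derivative_X, smul_eq_mul] at h ⊢
    linear_combination h
  have hE : u * E x = 1 := by
    have h := congrArg E hx
    rw [map_add, Derivation.leibniz, Derivation.map_aeval] at h
    simp only [E, Derivation.mapCoeffsPowerSeries_C, Derivation.mapCoeffsPowerSeries_X, hc,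
      map_one, smul_eq_mul] at h
    linear_combination h
  linear_combination E x * hD - D x * hE

theorem factorial_mul_coeff_succ_of_eq_C_add_X_mul_aeval (d : Derivation R A A) (hc : d c = 1)
    (n : ℕ) :
    ((n + 1).factorial : A) * coeff (n + 1) x = d^[n] (Polynomial.aeval c (β ^ (n + 1))) := by
  have key := congrArg constantCoeff <| Derivation.iterate_succ_apply_of_commute
    (D := (d⁄dX A).restrictScalars R) d.derivative_mapCoeffsPowerSeries
    (derivative_eq_aeval_mul_mapCoeffsPowerSeries hx d hc) n
  rwa [Derivation.coe_restrictScalars, constantCoeff_iterate_derivative,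
    d.constantCoeff_iterate_mapCoeffsPowerSeries, map_mul, constantCoeff_aeval,
    d.constantCoeff_mapCoeffsPowerSeries, constantCoeff_of_eq_C_add_X_mul_aeval hx, hc,
    mul_one] at key

end PowerSeries

/-- The fixed point equation `x = g + t·β(x)` (with `g` the polynomial variable, serving as a
formal parameter, and `t` the power series variable) has a unique formal power series solution
in `t`; its constant term is `g` and its higher coefficients are given by
`f_n(g)/n! = (d/dg)^(n-1)[β(g)^n]/n!`. -/
theorem fixed_point_equation_solution (β : Polynomial ℚ) :
    (∃! x : PowerSeries (Polynomial ℚ),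
        x = PowerSeries.C Polynomial.X
              + PowerSeries.X * Polynomial.aeval x β)
    ∧ ∀ x : PowerSeries (Polynomial ℚ),
        x = PowerSeries.C Polynomial.X
              + PowerSeries.X * Polynomial.aeval x β →
          PowerSeries.constantCoeff x = Polynomial.X ∧
          ∀ n : ℕ, 1 ≤ n →
            PowerSeries.coeff n x
              = (n.factorial : ℚ)⁻¹ • (Polynomial.derivative^[n - 1] (β ^ n)) := by
  refine ⟨PowerSeries.existsUnique_eq_C_add_X_mul_aeval _ β, fun x hx =>
    ⟨PowerSeries.constantCoeff_of_eq_C_add_X_mul_aeval hx, fun n hn => ?_⟩⟩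
  obtain ⟨m, rfl⟩ := Nat.exists_eq_add_of_le' hn
  have h := PowerSeries.factorial_mul_coeff_succ_of_eq_C_add_X_mul_aeval hx
    Polynomial.derivative' Polynomial.derivative_X m
  rw [Polynomial.aeval_X_left_apply, ← nsmul_eq_mul, ← Nat.cast_smul_eq_nsmul ℚ] at h
  change _ = Polynomial.derivative^[m] _ at h
  rw [Nat.add_sub_cancel, ← h, smul_smul, inv_mul_cancel₀ (by positivity), one_smul]
end

section
/- Fix n ≥ 1 and a formal power series β. Then (β(g) d/dg)^{n-1} β(g) = Σ_{T} ∏_{j=1}^{n} β^{(deg_T(j))}(g), where the sum is over all increasing rooted trees T on {1,...,n} and deg_T(j) is the number of children of j. -/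
open Polynomial Finset

private lemma deriv_prod {ι : Type*} [DecidableEq ι] (s : Finset ι) (f : ι → Polynomial ℚ) :
    Polynomial.derivative (∏ i ∈ s, f i)
      = ∑ i ∈ s, (∏ j ∈ s.erase i, f j) * Polynomial.derivative (f i) := by
  induction s using Finset.induction_on with
  | empty => simp
  | @insert a s ha ih =>
      rw [Finset.prod_insert ha, derivative_mul, ih, Finset.sum_insert ha,
        Finset.erase_insert ha, Finset.mul_sum, mul_comm (derivative (f a))]
      congr 1
      refine Finset.sum_congr rfl fun i hi => ?_
      rw [Finset.erase_insert_of_ne (by rintro rfl; exact ha hi),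
        Finset.prod_insert (fun h => ha (Finset.mem_of_mem_erase h)), mul_assoc]

private lemma last_ne_zero (m : ℕ) : (Fin.last (m + 1)) ≠ 0 := by
  simp [Fin.ext_iff]

/-- the snoc extension of a parent function -/
private def extFn (m : ℕ) (p : Fin (m + 1) → Fin (m + 1)) (k : Fin (m + 1)) :
    Fin (m + 2) → Fin (m + 2) :=
  Fin.snoc (fun j => (p j).castSucc) k.castSucc

private lemma val_lt (m : ℕ) (P : Fin (m + 2) → Fin (m + 2)) (h0 : P 0 = 0)
    (hlt : ∀ i, i ≠ 0 → P i < i) (a : Fin (m + 1)) : (P a.castSucc).val < m + 1 := by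
  rcases eq_or_ne a 0 with rfl | h
  · rw [Fin.castSucc_zero, h0]; exact Nat.succ_pos m
  · have h2 := hlt a.castSucc (by simpa [Fin.castSucc_eq_zero_iff] using h)
    have h3 : (P a.castSucc).val < a.castSucc.val := h2
    simp only [Fin.coe_castSucc] at h3
    omega

private lemma val_lt' (m : ℕ) (P : Fin (m + 2) → Fin (m + 2))
    (hlt : ∀ i, i ≠ 0 → P i < i) : (P (Fin.last (m + 1))).val < m + 1 := by
  have := hlt (Fin.last (m + 1)) (last_ne_zero m)
  simpa [Fin.lt_def] using this

private lemma deg_castSucc (m : ℕ) (p : Fin (m + 1) → Fin (m + 1)) (k b : Fin (m + 1)) :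
    (Finset.univ.filter (fun i : Fin (m + 2) => i ≠ 0 ∧ extFn m p k i = b.castSucc)).card
      = (Finset.univ.filter (fun i : Fin (m + 1) => i ≠ 0 ∧ p i = b)).card
        + (if k = b then 1 else 0) := by
  rw [Finset.card_filter, Finset.card_filter, Fin.sum_univ_castSucc]
  congr 1
  · refine Finset.sum_congr rfl fun a _ => ?_
    simp [extFn, Fin.snoc_castSucc, Fin.castSucc_eq_zero_iff, Fin.castSucc_inj]
  · simp [extFn, Fin.snoc_last, Fin.castSucc_inj, last_ne_zero m]

private lemma deg_last (m : ℕ) (p : Fin (m + 1) → Fin (m + 1)) (k : Fin (m + 1)) :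
    (Finset.univ.filter (fun i : Fin (m + 2) => i ≠ 0 ∧ extFn m p k i = Fin.last (m + 1))).card
      = 0 := by
  rw [Finset.card_eq_zero, Finset.filter_eq_empty_iff]
  intro i _
  refine Fin.lastCases ?_ ?_ i
  · simp only [extFn]; rw [Fin.snoc_last]; rintro ⟨-, h⟩; exact absurd h (Fin.castSucc_lt_last k).ne
  · intro a; simp only [extFn]; rw [Fin.snoc_castSucc]; rintro ⟨-, h⟩
    exact absurd h (Fin.castSucc_lt_last (p a)).ne

private lemma key (β : Polynomial ℚ) (m : ℕ) :
    (fun q => β * Polynomial.derivative q)^[m] β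
      = ∑ p ∈ Finset.univ.filter
          (fun p : Fin (m + 1) → Fin (m + 1) => p 0 = 0 ∧ ∀ i, i ≠ 0 → p i < i),
          ∏ j : Fin (m + 1),
            Polynomial.derivative^[(Finset.univ.filter
              (fun i : Fin (m + 1) => i ≠ 0 ∧ p i = j)).card] β := by
  induction m with
  | zero =>
      have h1 : (Finset.univ.filter
          (fun p : Fin 1 → Fin 1 => p 0 = 0 ∧ ∀ i, i ≠ 0 → p i < i)) = Finset.univ :=
        Finset.filter_true_of_mem fun p _ =>
          ⟨Subsingleton.elim _ _, fun i hi => absurd (Subsingleton.elim i 0) hi⟩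
      have h2 : ∀ (p : Fin 1 → Fin 1) (j : Fin 1),
          (Finset.univ.filter (fun i : Fin 1 => i ≠ 0 ∧ p i = j)) = ∅ :=
        fun p j => Finset.filter_false_of_mem fun i _ h => h.1 (Subsingleton.elim i 0)
      have h3 : ∀ p : Fin 1 → Fin 1, (∏ j : Fin 1,
          Polynomial.derivative^[(Finset.univ.filter
            (fun i : Fin 1 => i ≠ 0 ∧ p i = j)).card] β) = β := by
        intro p
        rw [Fin.prod_univ_one, h2, Finset.card_empty, Function.iterate_zero, id]
      rw [h1, Finset.sum_congr rfl (fun p _ => h3 p), Finset.sum_const, Finset.card_univ]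
      simp
  | succ m ih =>
      rw [Function.iterate_succ_apply']
      show β * Polynomial.derivative ((fun q => β * Polynomial.derivative q)^[m] β) = _
      rw [ih, map_sum, Finset.mul_sum]
      have step1 : ∀ p ∈ Finset.univ.filter
          (fun p : Fin (m + 1) → Fin (m + 1) => p 0 = 0 ∧ ∀ i, i ≠ 0 → p i < i),
          β * Polynomial.derivative (∏ j : Fin (m + 1),
            Polynomial.derivative^[(Finset.univ.filter
              (fun i : Fin (m + 1) => i ≠ 0 ∧ p i = j)).card] β)
          = ∑ k : Fin (m + 1), β *
              ((∏ j ∈ Finset.univ.erase k,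
                Polynomial.derivative^[(Finset.univ.filter
                  (fun i : Fin (m + 1) => i ≠ 0 ∧ p i = j)).card] β) *
               Polynomial.derivative (Polynomial.derivative^[(Finset.univ.filter
                  (fun i : Fin (m + 1) => i ≠ 0 ∧ p i = k)).card] β)) := by
        intro p _
        rw [deriv_prod, Finset.mul_sum]
      rw [Finset.sum_congr rfl step1, ← Finset.sum_product']
      refine Finset.sum_bij'
        (fun x _ => extFn m x.1 x.2)
        (fun P hP =>
          (fun a => ⟨(P a.castSucc).val,
            val_lt m P (Finset.mem_filter.mp hP).2.1 (Finset.mem_filter.mp hP).2.2 a⟩,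
           ⟨(P (Fin.last (m + 1))).val, val_lt' m P (Finset.mem_filter.mp hP).2.2⟩))
        ?_ ?_ ?_ ?_ ?_
      · -- forward membership
        rintro ⟨p, k⟩ hx
        rw [Finset.mem_product, Finset.mem_filter] at hx
        obtain ⟨⟨-, hp0, hplt⟩, -⟩ := hx
        replace hp0 : p 0 = 0 := hp0
        replace hplt : ∀ i, i ≠ 0 → p i < i := hplt
        rw [Finset.mem_filter]
        refine ⟨Finset.mem_univ _, ?_, ?_⟩
        · have h : (0 : Fin (m + 2)) = (0 : Fin (m + 1)).castSucc := by
            rw [Fin.castSucc_zero]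
          rw [h]; simp only [extFn]; rw [Fin.snoc_castSucc, hp0, Fin.castSucc_zero]
        · intro i hi
          refine Fin.lastCases ?_ ?_ i hi
          · intro _; simp only [extFn]; rw [Fin.snoc_last]; exact Fin.castSucc_lt_last k
          · intro a ha
            simp only [extFn]; rw [Fin.snoc_castSucc]
            exact Fin.castSucc_lt_castSucc_iff.mpr
              (hplt a (by simpa [Fin.castSucc_eq_zero_iff] using ha))
      · -- backward membership
        intro P hP
        rw [Finset.mem_product, Finset.mem_filter]
        obtain ⟨-, hP0, hPlt⟩ := Finset.mem_filter.mp hP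
        refine ⟨⟨Finset.mem_univ _, ?_, ?_⟩, Finset.mem_univ _⟩
        · apply Fin.ext
          simp only
          rw [Fin.castSucc_zero, hP0]
          rfl
        · intro a ha
          have h := hPlt a.castSucc (by simpa [Fin.castSucc_eq_zero_iff] using ha)
          rw [Fin.lt_def]
          simpa [Fin.lt_def] using h
      · -- left inverse
        rintro ⟨p, k⟩ hx
        refine Prod.ext ?_ ?_
        · funext a
          apply Fin.ext
          simp [extFn, Fin.snoc_castSucc]
        · apply Fin.ext
          simp [extFn, Fin.snoc_last]
      · -- right inverse
        intro P hP
        funext i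
        refine Fin.lastCases ?_ ?_ i
        · simp only [extFn]; rw [Fin.snoc_last]; apply Fin.ext; simp
        · intro a; simp only [extFn]; rw [Fin.snoc_castSucc]; apply Fin.ext; simp
      · -- values agree
        rintro ⟨p, k⟩ hx
        rw [Fin.prod_univ_castSucc]
        rw [deg_last m p k]
        simp only [deg_castSucc m p k, Function.iterate_zero, id]
        rw [← Finset.mul_prod_erase Finset.univ _ (Finset.mem_univ k), if_pos rfl,
          Function.iterate_succ_apply']
        have hprod : (∏ b ∈ Finset.univ.erase k,
            Polynomial.derivative^[(Finset.univ.filter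
              (fun i : Fin (m + 1) => i ≠ 0 ∧ p i = b)).card + (if k = b then 1 else 0)] β)
            = ∏ b ∈ Finset.univ.erase k,
                Polynomial.derivative^[(Finset.univ.filter
                  (fun i : Fin (m + 1) => i ≠ 0 ∧ p i = b)).card] β :=
          Finset.prod_congr rfl fun b hb => by
            rw [if_neg (fun h => (Finset.mem_erase.mp hb).1 h.symm), Nat.add_zero]
        rw [hprod]
        ring

/-- `(β(g)·d/dg)^(n-1) β(g) = Σ_T ∏_j β^{(deg_T(j))}(g)`, the sum over all increasing rooted
trees on `{1,…,n}` — encoded via their parent functions `φ` on `Fin n` with `φ 0 = 0` and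
`φ i < i` for `i ≠ 0` — where `deg_T(j) = |φ⁻¹(j) ∖ {0}|` is the number of children of `j`. -/
theorem stmt12 (n : ℕ) (hn : 1 ≤ n) (β : Polynomial ℚ) :
    (fun q => β * Polynomial.derivative q)^[n - 1] β
      = ∑ᶠ T : {p : Fin n → Fin n // p ⟨0, hn⟩ = ⟨0, hn⟩ ∧ ∀ i, i ≠ ⟨0, hn⟩ → p i < i},
          ∏ j : Fin n,
            Polynomial.derivative^[Nat.card {i : Fin n // i ≠ ⟨0, hn⟩ ∧ T.val i = j}] β := by
  obtain ⟨m, rfl⟩ : ∃ m, n = m + 1 := ⟨n - 1, by omega⟩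
  rw [finsum_eq_sum_of_fintype]
  show (fun q => β * Polynomial.derivative q)^[m] β
      = ∑ T : {p : Fin (m + 1) → Fin (m + 1) // p 0 = 0 ∧ ∀ i, i ≠ 0 → p i < i},
          ∏ j : Fin (m + 1),
            Polynomial.derivative^[Nat.card {i : Fin (m + 1) // i ≠ 0 ∧ T.val i = j}] β
  rw [key β m,
    Finset.sum_subtype (p := fun p : Fin (m + 1) → Fin (m + 1) =>
        p 0 = 0 ∧ ∀ i, i ≠ 0 → p i < i) _ (fun x => by simp)
      (fun p => ∏ j : Fin (m + 1),
        Polynomial.derivative^[(Finset.univ.filter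
          (fun i : Fin (m + 1) => i ≠ 0 ∧ p i = j)).card] β)]
  refine Finset.sum_congr rfl fun p _ => Finset.prod_congr rfl fun j _ => ?_
  congr 1
  rw [Nat.card_eq_fintype_card, Fintype.card_subtype]
end

section
/- The exponential generating function a(t) = Σ_{n≥1} n^{n-1} t^n/n! for labeled rooted trees satisfies the functional equation a(t) = t·exp(a(t)) as formal power series. -/
/-!
Write `a = X * b`. Both `b` and `exp(a)` have constant term `1` and solve the linear equation
`y' = y * a'` (for `exp(a)` by the chain rule), whose solution is determined by its constant term;
hence `b = exp(a)`. Coefficientwise, `b' = b * a'` is the convolution identity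
`∑_{i+j=n} C(n+1,i+1) (i+1)^i (j+1)^j = (n+1) (n+2)^n`, the value at `X = 1` of the Abel-type
polynomial identity `∑_{i+j=n} C(n+1,i+1) (i+1)^i (X+j)^j = (n+1) (X+n+1)^n`. The latter goes by
induction on `n`: differentiating the left side at level `n+1` gives `n+2` times the level-`n` side
shifted by `1`, and at `X = -(n+2)` the left side is the `(n+2)`-nd finite difference of
`k ↦ k^(n+1)`, hence `0`.
-/

open Finset

theorem sum_range_neg_one_pow_mul_choose_mul_pow_eq_zero {R : Type*} [CommRing R] {j n : ℕ}
    (h : j < n) : ∑ k ∈ range (n + 1), (-1 : R) ^ (n - k) * n.choose k * (k : R) ^ j = 0 := by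
  have := congrFun (fwdDiff_iter_pow_eq_zero_of_lt (R := R) h) 0
  rw [fwdDiff_iter_eq_sum_shift] at this
  simpa [zsmul_eq_mul] using this

section Abel

open Polynomial

theorem Polynomial.eq_of_derivative_eq_of_eval_eq {R : Type*} [CommRing R] [IsAddTorsionFree R]
    {p q : R[X]} (hd : derivative p = derivative q) (x : R) (hx : p.eval x = q.eval x) :
    p = q := by
  have hc := eq_C_of_derivative_eq_zero (p := p - q) (by rw [derivative_sub, hd, sub_self])
  rw [← sub_eq_zero, hc, ← eval_C (x := x) (a := (p - q).coeff 0), ← hc, eval_sub, hx,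
    sub_self, map_zero]

variable (R : Type*) [CommRing R]

noncomputable def abelPoly (n : ℕ) : R[X] :=
  ∑ p ∈ antidiagonal n,
    C ((n + 1).choose (p.1 + 1) * (p.1 + 1 : R) ^ p.1) * (X + C (p.2 : R)) ^ p.2

theorem derivative_abelPoly_succ (n : ℕ) :
    derivative (abelPoly R (n + 1)) = C (n + 2 : R) * (abelPoly R n).comp (X + 1) := by
  rw [abelPoly, abelPoly, Nat.sum_antidiagonal_succ', derivative_add, pow_zero, mul_one,
    derivative_C, zero_add, derivative_sum, Polynomial.sum_comp, mul_sum]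
  refine sum_congr rfl fun ⟨i, j⟩ hij => ?_
  rw [HasAntidiagonal.mem_antidiagonal] at hij
  have hchoose : (n + 2).choose (i + 1) * (j + 1) = (n + 2) * (n + 1).choose (i + 1) := by
    rw [mul_comm (n + 2), Nat.choose_mul_succ_eq, show n + 1 + 1 - (i + 1) = j + 1 by omega]
  simp only [derivative_C_mul, derivative_pow, derivative_add, derivative_X, derivative_C,
    add_zero, mul_one, mul_comp, C_comp, pow_comp, add_comp, X_comp, add_tsub_cancel_right]
  rw [show (X + 1 + C (j : R)) = X + C ((j + 1 : ℕ) : R) by simp [add_assoc, add_comm (1 : R[X])]]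
  simp only [← mul_assoc, ← C_mul]
  refine congrArg (fun c : R => C c * (X + C ((j + 1 : ℕ) : R)) ^ j) ?_
  have hcast := congrArg (Nat.cast : ℕ → R) hchoose
  push_cast at hcast ⊢
  linear_combination ((i + 1 : R) ^ i) * hcast

theorem eval_abelPoly_succ_neg (n : ℕ) : (abelPoly R (n + 1)).eval (-(n + 2 : R)) = 0 := by
  have hdiff := sum_range_neg_one_pow_mul_choose_mul_pow_eq_zero (R := R) (lt_add_one (n + 1))
  rw [sum_range_succ'] at hdiff
  simp only [Nat.cast_zero, ne_eq, Nat.add_eq_zero_iff, one_ne_zero, and_false,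
    not_false_eq_true, zero_pow, mul_zero, add_zero, Nat.cast_add_one,
    Nat.add_sub_add_right] at hdiff
  rw [abelPoly, eval_finsetSum, Nat.sum_antidiagonal_eq_sum_range_succ_mk, ← hdiff]
  refine sum_congr rfl fun i hi => ?_
  obtain ⟨j, hj⟩ : ∃ j, n + 1 - i = j := ⟨_, rfl⟩
  have hij : i + j = n + 1 := by rw [mem_range] at hi; omega
  simp only [hj]
  have hsum : -(n + 2 : R) + j = -(i + 1) := by
    rw [show (n : R) = i + j - 1 by rw [← Nat.cast_add, hij]; push_cast; ring]
    ring
  simp only [eval_mul, eval_C, eval_pow, eval_add, eval_X, hsum, neg_pow (i + 1 : R)]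
  rw [← hij, pow_add]
  ring

theorem abelPoly_eq [IsAddTorsionFree R] (n : ℕ) :
    abelPoly R n = C (n + 1 : R) * (X + C (n + 1 : R)) ^ n := by
  induction n with
  | zero => simp [abelPoly]
  | succ n ih =>
    refine eq_of_derivative_eq_of_eval_eq ?_ (-(n + 2 : R)) ?_
    · rw [derivative_abelPoly_succ, ih]
      simp only [mul_comp, C_comp, pow_comp, add_comp, X_comp, derivative_C_mul, derivative_pow,
        derivative_add, derivative_X, derivative_C, add_zero, mul_one, add_tsub_cancel_right]
      push_cast
      simp only [C_add, C_1, map_natCast, C_ofNat]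
      ring
    · rw [eval_abelPoly_succ_neg]
      simp only [eval_mul, eval_C, eval_pow, eval_add, eval_X]
      push_cast
      ring

theorem sum_antidiagonal_choose_mul_pow_mul_pow [IsAddTorsionFree R] (n : ℕ) :
    ∑ p ∈ antidiagonal n,
        ((n + 1).choose (p.1 + 1) : R) * (p.1 + 1 : R) ^ p.1 * (p.2 + 1 : R) ^ p.2
      = (n + 1) * (n + 2) ^ n := by
  have h := congrArg (eval 1) (abelPoly_eq R n)
  simp only [abelPoly, eval_finsetSum, eval_mul, eval_C, eval_pow, eval_add, eval_X] at h
  exact (sum_congr rfl fun p _ => by ring).trans (h.trans (by ring))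

end Abel

open PowerSeries Nat

theorem PowerSeries.eq_of_derivative_eq_mul {R : Type*} [CommRing R] [IsAddTorsionFree R]
    {f g h : R⟦X⟧} (hf : d⁄dX R f = f * h) (hg : d⁄dX R g = g * h)
    (h0 : constantCoeff f = constantCoeff g) : f = g := by
  have hd : d⁄dX R (f - g) = (f - g) * h := by rw [map_sub, hf, hg, sub_mul]
  have hcoeff : ∀ n, coeff n (f - g) = 0 := by
    intro n
    induction n using Nat.strong_induction_on with
    | _ n ih =>
      rcases n with _ | n
      · simp [h0]
      · have hn := congrArg (coeff n) hd
        rw [coeff_derivative, coeff_mul, sum_eq_zero fun p hp => by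
          rw [ih p.1 (by rw [HasAntidiagonal.mem_antidiagonal] at hp; omega), zero_mul]] at hn
        have : (n + 1) • coeff (n + 1) (f - g) = 0 := by
          rw [nsmul_eq_mul, mul_comm]; exact_mod_cast hn
        exact (smul_eq_zero.mp this).resolve_left (succ_ne_zero n)
  exact sub_eq_zero.mp (ext hcoeff)

theorem PowerSeries.coeff_subst_of_constantCoeff_eq_zero {R : Type*} [CommRing R]
    {f g : R⟦X⟧} (hg : constantCoeff g = 0) (n : ℕ) :
    coeff n (f.subst g) = ∑ k ∈ range (n + 1), coeff k f * coeff n (g ^ k) := by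
  rw [coeff_subst' (HasSubst.of_constantCoeff_zero' hg),
    finsum_eq_sum_of_support_subset (s := range (n + 1))]
  · simp only [smul_eq_mul]
  · intro k hk
    rw [coe_range, Set.mem_Iio, Nat.lt_succ_iff]
    by_contra! hlt
    refine hk ?_
    dsimp only
    rw [coeff_of_lt_order n ((le_order_pow_of_constantCoeff_eq_zero k hg).trans_lt'
      (by exact_mod_cast hlt)), smul_zero]

theorem PowerSeries.derivative_exp_subst {A : Type*} [CommRing A] [Algebra ℚ A] {g : A⟦X⟧}
    (hg : HasSubst g) : d⁄dX A ((exp A).subst g) = (exp A).subst g * d⁄dX A g := by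
  rw [derivative_subst hg, derivative_exp]

noncomputable def rootedTreeEGF : ℚ⟦X⟧ :=
  mk fun n => if n = 0 then 0 else (n : ℚ) ^ (n - 1) / n !

noncomputable def rootedTreeEGFDivX : ℚ⟦X⟧ := mk fun n => ((n : ℚ) + 1) ^ n / (n + 1)!

theorem X_mul_rootedTreeEGFDivX : X * rootedTreeEGFDivX = rootedTreeEGF := by
  ext n
  rcases n with _ | n
  · simp [rootedTreeEGF]
  · simp [rootedTreeEGF, rootedTreeEGFDivX, coeff_succ_X_mul]

theorem coeff_derivative_rootedTreeEGF (n : ℕ) :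
    coeff n (d⁄dX ℚ rootedTreeEGF) = ((n : ℚ) + 1) ^ n / n ! := by
  rw [coeff_derivative, rootedTreeEGF, coeff_mk, if_neg (succ_ne_zero n), factorial_succ]
  push_cast
  field_simp

theorem derivative_rootedTreeEGFDivX :
    d⁄dX ℚ rootedTreeEGFDivX = rootedTreeEGFDivX * d⁄dX ℚ rootedTreeEGF := by
  ext n
  rw [coeff_derivative, coeff_mul]
  calc coeff (n + 1) rootedTreeEGFDivX * (n + 1)
      = (n + 1) * (n + 2) ^ n / (n + 1)! := by
        rw [rootedTreeEGFDivX, coeff_mk, factorial_succ (n + 1)]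
        push_cast
        field_simp
        ring
    _ = ∑ p ∈ antidiagonal n,
          ((n + 1).choose (p.1 + 1) : ℚ) * (p.1 + 1 : ℚ) ^ p.1 * (p.2 + 1 : ℚ) ^ p.2
            / (n + 1)! := by
        rw [← sum_div, sum_antidiagonal_choose_mul_pow_mul_pow]
    _ = _ := by
        refine sum_congr rfl fun ⟨i, j⟩ hij => ?_
        rw [HasAntidiagonal.mem_antidiagonal] at hij
        rw [coeff_derivative_rootedTreeEGF, rootedTreeEGFDivX, coeff_mk, ← hij,
          show i + j + 1 = (i + 1) + j by ring, Nat.cast_add_choose, factorial_succ i]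
        push_cast
        field_simp

theorem constantCoeff_rootedTreeEGF : constantCoeff rootedTreeEGF = 0 := by
  simp [rootedTreeEGF]

theorem rootedTreeEGFDivX_eq_exp_subst : rootedTreeEGFDivX = (exp ℚ).subst rootedTreeEGF := by
  refine eq_of_derivative_eq_mul derivative_rootedTreeEGFDivX
    (derivative_exp_subst (HasSubst.of_constantCoeff_zero' constantCoeff_rootedTreeEGF)) ?_
  rw [← coeff_zero_eq_constantCoeff_apply, ← coeff_zero_eq_constantCoeff_apply,
    coeff_subst_of_constantCoeff_eq_zero constantCoeff_rootedTreeEGF]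
  simp [rootedTreeEGFDivX]

theorem rootedTreeEGF_eq_X_mul_exp_subst : rootedTreeEGF = X * (exp ℚ).subst rootedTreeEGF := by
  rw [← rootedTreeEGFDivX_eq_exp_subst, X_mul_rootedTreeEGFDivX]

/-- The exponential generating function `a(t) = Σ_{n≥1} n^{n-1} t^n/n!` of labeled rooted
trees satisfies `a(t) = t·exp(a(t))` as formal power series.  Since `a` has zero constant
term, the composite `exp(a(t))` has `n`-th coefficient `Σ_{k≤n} (1/k!)·coeff_n(a^k)`, so the
functional equation reads coefficientwise as below. -/
theorem egf_labeled_rooted_trees :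
    (PowerSeries.constantCoeff
        (PowerSeries.mk fun n => if n = 0 then 0 else (n : ℚ) ^ (n - 1) / n.factorial) = 0)
    ∧ ∀ n : ℕ, 1 ≤ n →
        PowerSeries.coeff n
            (PowerSeries.mk fun m => if m = 0 then 0 else (m : ℚ) ^ (m - 1) / m.factorial)
          = ∑ k ∈ Finset.range n, (k.factorial : ℚ)⁻¹ *
              PowerSeries.coeff (n - 1)
                ((PowerSeries.mk fun m =>
                    if m = 0 then 0 else (m : ℚ) ^ (m - 1) / m.factorial) ^ k) := by
  refine ⟨constantCoeff_rootedTreeEGF, fun n hn => ?_⟩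
  obtain ⟨m, rfl⟩ : ∃ m, n = m + 1 := ⟨n - 1, by omega⟩
  change coeff (m + 1) rootedTreeEGF
    = ∑ k ∈ range (m + 1), (k ! : ℚ)⁻¹ * coeff (m + 1 - 1) (rootedTreeEGF ^ k)
  calc coeff (m + 1) rootedTreeEGF
      = coeff (m + 1) (X * (exp ℚ).subst rootedTreeEGF) := by
        rw [← rootedTreeEGF_eq_X_mul_exp_subst]
    _ = _ := by
        rw [coeff_succ_X_mul, coeff_subst_of_constantCoeff_eq_zero constantCoeff_rootedTreeEGF,
          add_tsub_cancel_right]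
        simp
end

section
/- For each nonempty finite set U, there is a bijection between pairs (T₀, T) where T is a rooted tree on U and T₀ is a rooted subtree of T (sharing T's root), and triples (T₀, F₁, φ) where T₀ is a rooted tree on a subset U₀ ⊆ U containing at least the root, F₁ is a forest of rooted trees on U₁ = U \ U₀, and φ is a function from the set of trees (blocks) of F₁ to U₀. -/
/-!
Cutting a rooted tree `T` along a rooted subtree `T₀` on `U₀` leaves a forest on `U₁ = U ∖ U₀`
whose roots are exactly the vertices of `U₁` with parent in `U₀`, and `φ` sends each such root to
that parent. Conversely, grafting the forest onto `T₀` along `φ` gives a tree: a vertex of `U₁`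
climbs its forest tree to a root, `φ` moves it into `U₀`, and from there it climbs `T₀` to the
root. The two constructions are inverse because every parent pointer of `T` is stored in exactly
one of `T₀`, `F₁` and `φ`.
-/

/-- Restriction of a parent function to a set `A` (identity outside `A`), used to normalize
trees and forests living on subsets. -/
def restrictFun (n : ℕ) (p : Fin n → Fin n) (A : Finset (Fin n)) : Fin n → Fin n :=
  fun i => if i ∈ A then p i else i

/-- A labeled rooted tree on the subset `S` of `Fin n`: root `rp.1 ∈ S`, parent function
`rp.2` mapping `S` into `S`, normalized to be the identity off `S ∖ {root}`, with every
vertex of `S` reaching the root. -/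
def IsTreeOn (n : ℕ) (S : Finset (Fin n)) (rp : Fin n × (Fin n → Fin n)) : Prop :=
  rp.1 ∈ S ∧ (∀ i, i ∉ S.erase rp.1 → rp.2 i = i) ∧ (∀ i ∈ S, rp.2 i ∈ S) ∧
    ∀ i ∈ S, ∃ k : ℕ, rp.2^[k] i = rp.1

/-- A forest of labeled rooted trees on the subset `S` of `Fin n`, with root set `R ⊆ S` and
parent function `p` (identity off `S ∖ R`): every vertex of `S` reaches some root. -/
def IsForestOn (n : ℕ) (S R : Finset (Fin n)) (p : Fin n → Fin n) : Prop :=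
  R ⊆ S ∧ (∀ i, i ∉ S \ R → p i = i) ∧ (∀ i ∈ S, p i ∈ S) ∧
    ∀ i ∈ S, ∃ k : ℕ, p^[k] i ∈ R

open Finset Function

theorem Function.iterate_eq_of_forall_lt {α : Type*} {f g : α → α} {x : α} {k : ℕ}
    (h : ∀ j < k, g (f^[j] x) = f (f^[j] x)) : g^[k] x = f^[k] x := by
  induction k with
  | zero => rfl
  | succ k ih =>
    rw [iterate_succ_apply', iterate_succ_apply', ih fun j hj => h j (by omega), h k k.lt_succ_self]

theorem Function.iterate_mem_of_forall_lt_ne {α : Type*} {f : α → α} {s : Set α} {a x : α}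
    {k : ℕ} (hs : ∀ y ∈ s, y ≠ a → f y ∈ s) (hx : x ∈ s) (ha : ∀ j < k, f^[j] x ≠ a) :
    ∀ j ≤ k, f^[j] x ∈ s := by
  intro j hj
  induction j with
  | zero => exact hx
  | succ j ih =>
    rw [iterate_succ_apply']
    exact hs _ (ih (by omega)) (ha j hj)

section CutAndGraft

variable {n : ℕ}

theorem iterate_restrictFun_eq {p : Fin n → Fin n} {A : Finset (Fin n)} {i : Fin n} {k : ℕ}
    (h : ∀ j < k, p^[j] i ∈ A) : (restrictFun n p A)^[k] i = p^[k] i :=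
  iterate_eq_of_forall_lt fun j hj => if_pos (h j hj)

theorem restrictFun_of_mem {p : Fin n → Fin n} {A : Finset (Fin n)} {i : Fin n} (h : i ∈ A) :
    restrictFun n p A i = p i :=
  if_pos h

theorem restrictFun_of_notMem {p : Fin n → Fin n} {A : Finset (Fin n)} {i : Fin n} (h : i ∉ A) :
    restrictFun n p A i = i :=
  if_neg h

def forestRoots (n : ℕ) (p : Fin n → Fin n) (U₀ : Finset (Fin n)) : Finset (Fin n) :=
  univ.filter fun j => j ∉ U₀ ∧ p j ∈ U₀

theorem mem_forestRoots {p : Fin n → Fin n} {U₀ : Finset (Fin n)} {j : Fin n} :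
    j ∈ forestRoots n p U₀ ↔ j ∉ U₀ ∧ p j ∈ U₀ := by
  simp [forestRoots]

def graftParent (n : ℕ) (U₀ : Finset (Fin n)) (p₀ : Fin n → Fin n) (R : Finset (Fin n))
    (q φ : Fin n → Fin n) : Fin n → Fin n :=
  fun i => if i ∈ U₀ then p₀ i else if i ∈ R then φ i else q i

theorem graftParent_of_mem {U₀ R : Finset (Fin n)} {p₀ q φ : Fin n → Fin n} {i : Fin n}
    (h : i ∈ U₀) : graftParent n U₀ p₀ R q φ i = p₀ i :=
  if_pos h

variable {r : Fin n} {p p₀ q φ : Fin n → Fin n} {U₀ R : Finset (Fin n)}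

theorem isTreeOn_restrictFun_erase (hreach : ∀ i, ∃ k, p^[k] i = r) (hr : r ∈ U₀)
    (hcl : ∀ i ∈ U₀, i ≠ r → p i ∈ U₀) : IsTreeOn n U₀ (r, restrictFun n p (U₀.erase r)) := by
  refine ⟨hr, fun i hi => if_neg hi, fun i hi => ?_, fun i hi => ?_⟩
  · by_cases h : i ∈ U₀.erase r
    · simpa [restrictFun_of_mem h] using hcl i hi (ne_of_mem_erase h)
    · simpa [restrictFun_of_notMem h] using hi
  · obtain ⟨k, hk, hmin⟩ := Nat.findX (hreach i)
    have hmem := iterate_mem_of_forall_lt_ne (s := (U₀ : Set (Fin n))) hcl hi hmin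
    exact ⟨k, by rw [iterate_restrictFun_eq fun j hj => mem_erase.2 ⟨hmin j hj, hmem j hj.le⟩, hk]⟩

theorem isForestOn_compl_forestRoots (hreach : ∀ i, ∃ k, p^[k] i = r) (hr : r ∈ U₀) :
    IsForestOn n U₀ᶜ (forestRoots n p U₀) (restrictFun n p (U₀ᶜ \ forestRoots n p U₀)) := by
  refine ⟨fun j hj => mem_compl.2 (mem_forestRoots.1 hj).1, fun i hi => if_neg hi,
    fun i hi => ?_, fun i hi => ?_⟩
  · by_cases h : i ∈ U₀ᶜ \ forestRoots n p U₀
    · simp_all [restrictFun_of_mem h, mem_forestRoots]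
    · simpa [restrictFun_of_notMem h] using hi
  · obtain ⟨k, hk, hmin⟩ := Nat.findX (p := fun k => p^[k] i ∈ U₀)
      (let ⟨k, hk⟩ := hreach i; ⟨k, hk ▸ hr⟩)
    obtain ⟨m, rfl⟩ : ∃ m, k = m + 1 :=
      Nat.exists_eq_succ_of_ne_zero (by rintro rfl; exact mem_compl.1 hi hk)
    -- `p^[m] i` is the last vertex of the orbit outside `U₀`, hence a root of the forest
    refine ⟨m, ?_⟩
    rw [iterate_restrictFun_eq fun j hj => ?_]
    · exact mem_forestRoots.2 ⟨hmin m m.lt_succ_self, by rwa [iterate_succ_apply'] at hk⟩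
    · have hnext := hmin (j + 1) (by omega)
      rw [iterate_succ_apply'] at hnext
      simp [mem_forestRoots, hmin j (by omega), hnext]

theorem isTreeOn_graftParent (ht : IsTreeOn n U₀ (r, p₀)) (hf : IsForestOn n U₀ᶜ R q)
    (hφ : ∀ i ∈ R, φ i ∈ U₀) : IsTreeOn n univ (r, graftParent n U₀ p₀ R q φ) := by
  obtain ⟨hr, hnorm₀, hmap₀, hreach₀⟩ := ht
  obtain ⟨-, -, hmapq, hreachq⟩ := hf
  set g := graftParent n U₀ p₀ R q φ
  have hreachU : ∀ i ∈ U₀, ∃ k, g^[k] i = r := fun i hi => by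
    obtain ⟨k, hk⟩ := hreach₀ i hi
    have horbit := Set.MapsTo.iterate (s := (U₀ : Set (Fin n))) (fun j hj => hmap₀ j hj)
    exact ⟨k, by rw [iterate_eq_of_forall_lt fun j _ => if_pos (horbit j hi), hk]⟩
  refine ⟨mem_univ r, fun i hi => ?_, fun i _ => mem_univ _, fun i _ => ?_⟩
  · obtain rfl : i = r := by simpa using hi
    simpa [g, graftParent_of_mem hr] using hnorm₀ _ (notMem_erase _ _)
  · by_cases hi : i ∈ U₀
    · exact hreachU i hi
    obtain ⟨k, hk, hmin⟩ := Nat.findX (hreachq i (mem_compl.2 hi))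
    have horbit : ∀ j, q^[j] i ∉ U₀ := fun j =>
      mem_compl.1 (Set.MapsTo.iterate (s := ((U₀ᶜ : Finset _) : Set (Fin n)))
        (fun j hj => hmapq j hj) j (mem_compl.2 hi))
    have hclimb : g^[k] i = q^[k] i :=
      iterate_eq_of_forall_lt fun j hj => by simp [g, graftParent, horbit j, hmin j hj]
    obtain ⟨m, hm⟩ := hreachU (g^[k + 1] i) (by
      rw [iterate_succ_apply', hclimb]
      simpa [g, graftParent, horbit k, hk] using hφ _ hk)
    exact ⟨m + (k + 1), by rw [iterate_add_apply, hm]⟩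

theorem graftParent_restrictFun (hpr : p r = r) (hr : r ∈ U₀) :
    graftParent n U₀ (restrictFun n p (U₀.erase r)) (forestRoots n p U₀)
      (restrictFun n p (U₀ᶜ \ forestRoots n p U₀)) (restrictFun n p (forestRoots n p U₀)) = p := by
  funext i
  by_cases hi : i = r
  · subst hi; simp [graftParent, restrictFun, hr, hpr]
  · by_cases hU : i ∈ U₀ <;> by_cases hR : i ∈ forestRoots n p U₀ <;>
      simp [graftParent, restrictFun, hi, hU, hR]

theorem forestRoots_graftParent (hRU : R ⊆ U₀ᶜ) (hmapq : ∀ i ∈ U₀ᶜ, q i ∈ U₀ᶜ)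
    (hφ : ∀ i ∈ R, φ i ∈ U₀) : forestRoots n (graftParent n U₀ p₀ R q φ) U₀ = R := by
  ext j
  by_cases hjR : j ∈ R
  · have hjU := mem_compl.1 (hRU hjR)
    simp [mem_forestRoots, graftParent, hjU, hjR, hφ j hjR]
  · by_cases hjU : j ∈ U₀
    · simp [mem_forestRoots, hjU, hjR]
    · simpa [mem_forestRoots, graftParent, hjU, hjR] using hmapq j (mem_compl.2 hjU)

def IsTreeWithSubtree (n : ℕ) (x : (Fin n × (Fin n → Fin n)) × Finset (Fin n)) : Prop :=
  IsTreeOn n univ x.1 ∧ x.1.1 ∈ x.2 ∧ ∀ i ∈ x.2, i ≠ x.1.1 → x.1.2 i ∈ x.2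

def IsSubtreeWithForest (n : ℕ) (y : Finset (Fin n) × (Fin n × (Fin n → Fin n)) ×
    (Finset (Fin n) × (Fin n → Fin n)) × (Fin n → Fin n)) : Prop :=
  IsTreeOn n y.1 y.2.1 ∧ IsForestOn n y.1ᶜ y.2.2.1.1 y.2.2.1.2 ∧
    (∀ i ∈ y.2.2.1.1, y.2.2.2 i ∈ y.1) ∧ ∀ i ∉ y.2.2.1.1, y.2.2.2 i = i

def cutSubtree (n : ℕ) (x : (Fin n × (Fin n → Fin n)) × Finset (Fin n)) :
    Finset (Fin n) × (Fin n × (Fin n → Fin n)) ×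
      (Finset (Fin n) × (Fin n → Fin n)) × (Fin n → Fin n) :=
  (x.2, (x.1.1, restrictFun n x.1.2 (x.2.erase x.1.1)),
    (forestRoots n x.1.2 x.2, restrictFun n x.1.2 (x.2ᶜ \ forestRoots n x.1.2 x.2)),
    restrictFun n x.1.2 (forestRoots n x.1.2 x.2))

def graftForest (n : ℕ) (y : Finset (Fin n) × (Fin n × (Fin n → Fin n)) ×
    (Finset (Fin n) × (Fin n → Fin n)) × (Fin n → Fin n)) :
    (Fin n × (Fin n → Fin n)) × Finset (Fin n) :=
  ((y.2.1.1, graftParent n y.1 y.2.1.2 y.2.2.1.1 y.2.2.1.2 y.2.2.2), y.1)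

theorem isSubtreeWithForest_cutSubtree {x : (Fin n × (Fin n → Fin n)) × Finset (Fin n)}
    (hx : IsTreeWithSubtree n x) : IsSubtreeWithForest n (cutSubtree n x) := by
  obtain ⟨⟨r, p⟩, U₀⟩ := x
  obtain ⟨⟨-, -, -, hreach⟩, hr, hcl⟩ := hx
  have hreach' := fun i => hreach i (mem_univ i)
  refine ⟨isTreeOn_restrictFun_erase hreach' hr hcl, isForestOn_compl_forestRoots hreach' hr,
    fun i hi => ?_, fun i hi => if_neg hi⟩
  dsimp only [cutSubtree] at hi ⊢
  rw [restrictFun_of_mem hi]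
  exact (mem_forestRoots.1 hi).2

theorem isTreeWithSubtree_graftForest {y : Finset (Fin n) × (Fin n × (Fin n → Fin n)) ×
    (Finset (Fin n) × (Fin n → Fin n)) × (Fin n → Fin n)}
    (hy : IsSubtreeWithForest n y) : IsTreeWithSubtree n (graftForest n y) := by
  obtain ⟨U₀, ⟨r, p₀⟩, ⟨R, q⟩, φ⟩ := y
  obtain ⟨ht, hf, hφ, -⟩ := hy
  refine ⟨isTreeOn_graftParent ht hf hφ, ht.1, fun i hi _ => ?_⟩
  dsimp only [graftForest] at hi ⊢
  rw [graftParent_of_mem hi]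
  exact ht.2.2.1 i hi

theorem graftForest_cutSubtree {x : (Fin n × (Fin n → Fin n)) × Finset (Fin n)}
    (hx : IsTreeWithSubtree n x) : graftForest n (cutSubtree n x) = x := by
  obtain ⟨⟨r, p⟩, U₀⟩ := x
  obtain ⟨⟨-, hnorm, -, -⟩, hr, -⟩ := hx
  simp only [graftForest, cutSubtree, graftParent_restrictFun (hnorm r (by simp)) hr]

theorem cutSubtree_graftForest {y : Finset (Fin n) × (Fin n × (Fin n → Fin n)) ×
    (Finset (Fin n) × (Fin n → Fin n)) × (Fin n → Fin n)}
    (hy : IsSubtreeWithForest n y) : cutSubtree n (graftForest n y) = y := by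
  obtain ⟨U₀, ⟨r, p₀⟩, ⟨R, q⟩, φ⟩ := y
  obtain ⟨⟨hr, hnorm₀, -, -⟩, ⟨hRU, hnormq, hmapq, -⟩, hφ, hφid⟩ := hy
  simp only [cutSubtree, graftForest, forestRoots_graftParent hRU hmapq hφ, Prod.mk.injEq,
    true_and]
  refine ⟨funext fun i => ?_, funext fun i => ?_, funext fun i => ?_⟩
  · by_cases h : i ∈ U₀.erase r
    · rw [restrictFun_of_mem h, graftParent_of_mem (mem_of_mem_erase h)]
    · exact (restrictFun_of_notMem h).trans (hnorm₀ i h).symm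
  · by_cases h : i ∈ U₀ᶜ \ R
    · simp_all [restrictFun_of_mem h, graftParent]
    · exact (restrictFun_of_notMem h).trans (hnormq i h).symm
  · by_cases h : i ∈ R
    · simp [restrictFun_of_mem h, graftParent, mem_compl.1 (hRU h), h]
    · exact (restrictFun_of_notMem h).trans (hφid i h).symm

end CutAndGraft

theorem stmt15_general (n : ℕ) :
    ∃ e : {x : (Fin n × (Fin n → Fin n)) × Finset (Fin n) //
            IsTreeOn n Finset.univ x.1 ∧ x.1.1 ∈ x.2 ∧
              ∀ i ∈ x.2, i ≠ x.1.1 → x.1.2 i ∈ x.2}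
          ≃ {y : Finset (Fin n) × (Fin n × (Fin n → Fin n)) ×
                  (Finset (Fin n) × (Fin n → Fin n)) × (Fin n → Fin n) //
            IsTreeOn n y.1 y.2.1 ∧ IsForestOn n y.1ᶜ y.2.2.1.1 y.2.2.1.2 ∧
              (∀ i ∈ y.2.2.1.1, y.2.2.2 i ∈ y.1) ∧ ∀ i ∉ y.2.2.1.1, y.2.2.2 i = i},
      ∀ x, (e x).val =
        (x.val.2,
         (x.val.1.1, restrictFun n x.val.1.2 (x.val.2.erase x.val.1.1)),
         ((Finset.univ.filter fun j => j ∉ x.val.2 ∧ x.val.1.2 j ∈ x.val.2),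
          restrictFun n x.val.1.2
            (x.val.2ᶜ \ (Finset.univ.filter fun j => j ∉ x.val.2 ∧ x.val.1.2 j ∈ x.val.2))),
         restrictFun n x.val.1.2
           (Finset.univ.filter fun j => j ∉ x.val.2 ∧ x.val.1.2 j ∈ x.val.2)) :=
  ⟨⟨fun x => ⟨cutSubtree n x.1, isSubtreeWithForest_cutSubtree x.2⟩,
    fun y => ⟨graftForest n y.1, isTreeWithSubtree_graftForest y.2⟩,
    fun x => Subtype.ext (graftForest_cutSubtree x.2),
    fun y => Subtype.ext (cutSubtree_graftForest y.2)⟩, fun _ => rfl⟩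

/-- For each (nonempty) vertex set `Fin n` there is a bijection between pairs `(T, U₀)` of a
rooted tree `T` on `Fin n` and (the vertex set `U₀` of) a rooted subtree `T₀` of `T` sharing
its root, and triples `(T₀, F₁, φ)` of a rooted tree `T₀` on a subset `U₀` containing the
root, a forest `F₁` of rooted trees on the complement `U₁ = U ∖ U₀`, and a function `φ` from
the trees of the forest (identified with their roots) to `U₀`.  The bijection restricts `T`
to `U₀`, takes the difference forest on `U₁`, and records for each forest tree the vertex of
`U₀` to which its root attaches in `T`. -/
theorem stmt15 (n : ℕ) (hn : 1 ≤ n) :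
    ∃ e : {x : (Fin n × (Fin n → Fin n)) × Finset (Fin n) //
            IsTreeOn n Finset.univ x.1 ∧ x.1.1 ∈ x.2 ∧
              ∀ i ∈ x.2, i ≠ x.1.1 → x.1.2 i ∈ x.2}
          ≃ {y : Finset (Fin n) × (Fin n × (Fin n → Fin n)) ×
                  (Finset (Fin n) × (Fin n → Fin n)) × (Fin n → Fin n) //
            IsTreeOn n y.1 y.2.1 ∧ IsForestOn n y.1ᶜ y.2.2.1.1 y.2.2.1.2 ∧
              (∀ i ∈ y.2.2.1.1, y.2.2.2 i ∈ y.1) ∧ ∀ i ∉ y.2.2.1.1, y.2.2.2 i = i},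
      ∀ x, (e x).val =
        (x.val.2,
         (x.val.1.1, restrictFun n x.val.1.2 (x.val.2.erase x.val.1.1)),
         ((Finset.univ.filter fun j => j ∉ x.val.2 ∧ x.val.1.2 j ∈ x.val.2),
          restrictFun n x.val.1.2
            (x.val.2ᶜ \ (Finset.univ.filter fun j => j ∉ x.val.2 ∧ x.val.1.2 j ∈ x.val.2))),
         restrictFun n x.val.1.2
           (Finset.univ.filter fun j => j ∉ x.val.2 ∧ x.val.1.2 j ∈ x.val.2)) :=
  stmt15_general n
end

section
/- For each finite set U, there is a bijection between pairs (T, F) where T is a rooted tree on U and F is a subforest of T (obtained by deleting a set of edges, equivalently by choosing a set R of roots containing the root of T), and triples (F, T̂, φ) where F is a forest of rooted trees on U with block partition Γ, T̂ is a rooted tree on the vertex set Γ whose root is the block containing the root of T, and φ is a function on Γ minus the root block assigning to each block B a vertex φ(B) ∈ T̂(B). -/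
lemma iterFix {n : ℕ} {q : Fin n → Fin n} {R : Finset (Fin n)} (hq : ∀ j ∈ R, q j = j)
    {i : Fin n} {k : ℕ} (h : q^[k] i ∈ R) {m : ℕ} (hm : k ≤ m) : q^[m] i = q^[k] i := by
  induction m, hm using Nat.le_induction with
  | base => rfl
  | succ m hm ih => rw [Function.iterate_succ_apply', ih, hq _ (ih ▸ h)]

lemma hitN {n : ℕ} {q : Fin n → Fin n} {R : Finset (Fin n)} (hq : ∀ j ∈ R, q j = j)
    {i : Fin n} (h : ∃ k, q^[k] i ∈ R) :
    q^[n] i ∈ R ∧ ∀ k, q^[k] i ∈ R → q^[n] i = q^[k] i := by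
  classical
  set k₀ := Nat.find h with hk₀
  have hspec : q^[k₀] i ∈ R := Nat.find_spec h
  have hmin : ∀ t < k₀, q^[t] i ∉ R := fun t ht => Nat.find_min h ht
  have hinj : Set.InjOn (fun t => q^[t] i) ↑(Finset.range k₀) := by
    intro a ha b hb hab
    simp only [Finset.coe_range, Set.mem_Iio] at ha hb
    simp only at hab
    by_contra hne
    have main : ∀ a b : ℕ, a < k₀ → b < k₀ → q^[a] i = q^[b] i → a < b → False := by
      clear hab hne ha hb
      intro a b ha hb hab hlt
      have heq : q^[k₀ - b + a] i = q^[k₀] i := by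
        have h1 : k₀ = (k₀ - b) + b := by omega
        calc q^[k₀ - b + a] i = q^[k₀ - b] (q^[a] i) := Function.iterate_add_apply ..
          _ = q^[k₀ - b] (q^[b] i) := by rw [hab]
          _ = q^[k₀] i := by rw [← Function.iterate_add_apply, ← h1]
      exact hmin (k₀ - b + a) (by omega) (heq ▸ hspec)
    rcases Nat.lt_or_ge a b with hlt | hge
    · exact main a b ha hb hab hlt
    · exact main b a hb ha hab.symm (by omega)
  have hcard : k₀ ≤ n := by
    have := Finset.card_le_card_of_injOn (fun t => q^[t] i)
      (fun a _ => Finset.mem_univ (q^[a] i)) hinj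
    simpa using this
  have hn : q^[n] i = q^[k₀] i := iterFix hq hspec hcard
  refine ⟨hn ▸ hspec, fun k hk => ?_⟩
  have hle : k₀ ≤ k := Nat.find_min' h hk
  rw [hn, ← iterFix hq hspec hle]

lemma track {n : ℕ} {p q : Fin n → Fin n} {R : Finset (Fin n)}
    (hpq : ∀ i, i ∉ R → q i = p i) (hqR : ∀ i ∈ R, q i = i) :
    ∀ t i, ∃ s ≤ t, q^[t] i = p^[s] i ∧ (s < t → q^[t] i ∈ R) := by
  intro t i
  induction t with
  | zero => exact ⟨0, le_refl _, rfl, by omega⟩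
  | succ t ih =>
    obtain ⟨s, hs, heq, hst⟩ := ih
    by_cases hR : p^[s] i ∈ R
    · refine ⟨s, by omega, ?_, fun _ => ?_⟩
      · rw [Function.iterate_succ_apply', heq, hqR _ hR]
      · rw [Function.iterate_succ_apply', heq, hqR _ hR]; exact hR
    · refine ⟨s + 1, by omega, ?_, fun h => ?_⟩
      · rw [Function.iterate_succ_apply', heq, hpq _ hR,
          ← Function.iterate_succ_apply' p s i]
      · have := hst (by omega); rw [heq] at this; exact absurd this hR

lemma trackC {n : ℕ} {p q : Fin n → Fin n} {R : Finset (Fin n)}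
    (hpq : ∀ i, i ∉ R → p i = q i) (hqR : ∀ i ∈ R, q i = i) :
    ∀ t i, q^[t] i ∈ R → ∃ s, p^[s] i = q^[t] i := by
  intro t
  induction t with
  | zero => exact fun i h => ⟨0, rfl⟩
  | succ t ih =>
    intro i h
    rw [Function.iterate_succ_apply] at h ⊢
    by_cases hR : i ∈ R
    · rw [hqR i hR] at h ⊢
      exact ih i h
    · rw [← hpq i hR] at h
      obtain ⟨s, hs⟩ := ih (p i) h
      exact ⟨s + 1, by rw [Function.iterate_succ_apply, hs, hpq i hR]⟩

section Main

variable {n : ℕ}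

lemma forward_ok (r : Fin n) (p : Fin n → Fin n) (R : Finset (Fin n))
    (hT : IsTreeOn n Finset.univ (r, p)) (hrR : r ∈ R) :
    IsForestOn n Finset.univ R (restrictFun n p Rᶜ) ∧
    IsTreeOn n R (r, restrictFun n (fun j => (restrictFun n p Rᶜ)^[n] (p j)) (R.erase r)) ∧
    (∀ j ∈ R, j ≠ r → ∃ k : ℕ, (restrictFun n p Rᶜ)^[k] (restrictFun n p (R.erase r) j) =
        restrictFun n (fun j => (restrictFun n p Rᶜ)^[n] (p j)) (R.erase r) j) ∧
    ∀ j, j ∉ R.erase r → restrictFun n p (R.erase r) j = j := by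
  classical
  obtain ⟨-, hpnorm, -, hpreach⟩ := hT
  simp only at hpnorm hpreach
  set q := restrictFun n p Rᶜ with hq
  set phat := restrictFun n (fun j => q^[n] (p j)) (R.erase r) with hphat
  have hq_fix : ∀ j ∈ R, q j = j := by
    intro j hj; simp [hq, restrictFun, hj]
  have hq_out : ∀ i, i ∉ R → q i = p i := by
    intro i hi; simp [hq, restrictFun, hi]
  have hpr : p r = r := hpnorm r (by simp)
  have hreach : ∀ i : Fin n, ∃ k, q^[k] i ∈ R := by
    intro i
    obtain ⟨m, hm⟩ := hpreach i (Finset.mem_univ i)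
    obtain ⟨s, hs, heq, hst⟩ := track hq_out hq_fix m i
    rcases Nat.lt_or_ge s m with h | h
    · exact ⟨m, hst h⟩
    · have : s = m := by omega
      exact ⟨m, by rw [heq, this, hm]; exact hrR⟩
  have hroot : ∀ i : Fin n, q^[n] i ∈ R := fun i => (hitN hq_fix (hreach i)).1
  have hphat_mem : ∀ j ∈ R, phat j ∈ R := by
    intro j hj
    by_cases hje : j ∈ R.erase r
    · simpa [hphat, restrictFun, hje] using hroot (p j)
    · simpa [hphat, restrictFun, hje] using hj
  have key : ∀ m, ∀ j ∈ R, p^[m] j = r → ∃ k, phat^[k] j = r := by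
    intro m
    induction m using Nat.strong_induction_on with
    | _ m ih =>
      intro j hj hjm
      by_cases hjr : j = r
      · exact ⟨0, hjr⟩
      have hje : j ∈ R.erase r := Finset.mem_erase.mpr ⟨hjr, hj⟩
      have hphatj : phat j = q^[n] (p j) := by simp [hphat, restrictFun, hje]
      obtain ⟨s, hs, heq, -⟩ := track hq_out hq_fix n (p j)
      have h1 : phat j = p^[s+1] j := by
        rw [hphatj, heq, ← Function.iterate_succ_apply]
      have hmem : phat j ∈ R := hphat_mem j hj
      have hfixr : ∀ j' ∈ ({r} : Finset (Fin n)), p j' = j' := by simp [hpr]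
      rcases Nat.lt_or_ge s (m - 1) with hcase | hcase
      · have h2 : p^[m - (s+1)] (phat j) = r := by
          rw [h1, ← Function.iterate_add_apply]
          have hh : m - (s+1) + (s+1) = m := by omega
          rw [hh, hjm]
        obtain ⟨k, hk⟩ := ih (m - (s+1)) (by omega) (phat j) hmem h2
        exact ⟨k + 1, by rw [Function.iterate_add_apply, Function.iterate_one, hk]⟩
      · -- s + 1 ≥ m, so phat j = r
        have hsing : p^[m] j ∈ ({r} : Finset (Fin n)) := by simp [hjm]
        have h2 : p^[s+1] j = p^[m] j := iterFix hfixr hsing (by omega)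
        exact ⟨1, by rw [Function.iterate_one, h1, h2, hjm]⟩
  refine ⟨⟨Finset.subset_univ R, ?_, fun i _ => Finset.mem_univ _, fun i _ => hreach i⟩,
    ⟨hrR, ?_, ?_, ?_⟩, ?_, ?_⟩
  · intro i hi
    have : i ∈ R := by simpa using hi
    exact hq_fix i this
  · intro i hi
    simp only [hphat, restrictFun, if_neg hi]
  · exact fun i hi => hphat_mem i hi
  · intro i hi
    obtain ⟨m, hm⟩ := hpreach i (Finset.mem_univ i)
    exact key m i hi hm
  · intro j hj hjr
    have hje : j ∈ R.erase r := Finset.mem_erase.mpr ⟨hjr, hj⟩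
    refine ⟨n, ?_⟩
    show q^[n] (restrictFun n p (R.erase r) j) = phat j
    rw [show restrictFun n p (R.erase r) j = p j from if_pos hje]
    exact (if_pos hje).symm
  · intro j hj
    simp [restrictFun, hj]

lemma backward_ok (R : Finset (Fin n)) (q : Fin n → Fin n) (r : Fin n)
    (phat φ : Fin n → Fin n) (hF : IsForestOn n Finset.univ R q)
    (hThat : IsTreeOn n R (r, phat))
    (hφ : ∀ j ∈ R, j ≠ r → ∃ k : ℕ, q^[k] (φ j) = phat j) :
    IsTreeOn n Finset.univ (r, fun j => if j ∈ R.erase r then φ j else q j) := by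
  classical
  obtain ⟨-, hqnorm, -, hqreach⟩ := hF
  obtain ⟨hrR, -, hhatmem, hhatreach⟩ := hThat
  simp only at hqnorm hqreach hrR hhatmem hhatreach
  set p : Fin n → Fin n := fun j => if j ∈ R.erase r then φ j else q j with hp
  have hqR : ∀ j ∈ R, q j = j := by
    intro j hj; exact hqnorm j (by simp [hj])
  have hpq : ∀ i, i ∉ R → p i = q i := by
    intro i hi
    have : i ∉ R.erase r := fun h => hi (Finset.mem_of_mem_erase h)
    simp only [hp, if_neg this]
  have hprr : p r = r := by
    have : r ∉ R.erase r := by simp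
    simp only [hp, if_neg this]
    exact hqR r hrR
  have key : ∀ m, ∀ j, j ∈ R → phat^[m] j = r → ∃ k, p^[k] j = r := by
    intro m
    induction m with
    | zero => exact fun j hj h => ⟨0, h⟩
    | succ m ih =>
      intro j hj h
      by_cases hjr : j = r
      · exact ⟨0, hjr⟩
      obtain ⟨k₁, hk₁⟩ := hφ j hj hjr
      have hpR : phat j ∈ R := hhatmem j hj
      have hin : q^[k₁] (φ j) ∈ R := by rw [hk₁]; exact hpR
      obtain ⟨s, hs⟩ := trackC hpq hqR k₁ (φ j) hin
      have hpj : p j = φ j := by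
        have : j ∈ R.erase r := Finset.mem_erase.mpr ⟨hjr, hj⟩
        simp only [hp, if_pos this]
      have h2 : p^[s+1] j = phat j := by
        rw [Function.iterate_succ_apply, hpj, hs, hk₁]
      have h3 : phat^[m] (phat j) = r := by
        rw [← Function.iterate_succ_apply, h]
      obtain ⟨k, hk⟩ := ih (phat j) hpR h3
      exact ⟨k + (s+1), by rw [Function.iterate_add_apply, h2, hk]⟩
  refine ⟨Finset.mem_univ r, ?_, fun i _ => Finset.mem_univ _, ?_⟩
  · intro i hi
    have : i = r := by simpa using hi
    simpa [this] using hprr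
  · intro i _
    obtain ⟨k, hk⟩ := hqreach i (Finset.mem_univ i)
    obtain ⟨s, hs⟩ := trackC hpq hqR k i hk
    have hjR : p^[s] i ∈ R := by rw [hs]; exact hk
    obtain ⟨m, hm⟩ := hhatreach (p^[s] i) hjR
    obtain ⟨k', hk'⟩ := key m (p^[s] i) hjR hm
    exact ⟨k' + s, by rw [Function.iterate_add_apply, hk']⟩

end Main

variable {n : ℕ} in
private def fwd
    (x : {x : (Fin n × (Fin n → Fin n)) × Finset (Fin n) //
            IsTreeOn n Finset.univ x.1 ∧ x.1.1 ∈ x.2}) :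
    {y : (Finset (Fin n) × (Fin n → Fin n)) ×
            (Fin n × (Fin n → Fin n)) × (Fin n → Fin n) //
      IsForestOn n Finset.univ y.1.1 y.1.2 ∧ IsTreeOn n y.1.1 y.2.1 ∧
        (∀ j ∈ y.1.1, j ≠ y.2.1.1 → ∃ k : ℕ, y.1.2^[k] (y.2.2 j) = y.2.1.2 j) ∧
        ∀ j, j ∉ y.1.1.erase y.2.1.1 → y.2.2 j = j} :=
  ⟨((x.val.2, restrictFun n x.val.1.2 x.val.2ᶜ),
    (x.val.1.1,
     restrictFun n
       (fun j => (restrictFun n x.val.1.2 x.val.2ᶜ)^[n] (x.val.1.2 j))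
       (x.val.2.erase x.val.1.1)),
    restrictFun n x.val.1.2 (x.val.2.erase x.val.1.1)),
   forward_ok x.val.1.1 x.val.1.2 x.val.2 x.prop.1 x.prop.2⟩

variable {n : ℕ} in
private def bwd
    (y : {y : (Finset (Fin n) × (Fin n → Fin n)) ×
            (Fin n × (Fin n → Fin n)) × (Fin n → Fin n) //
      IsForestOn n Finset.univ y.1.1 y.1.2 ∧ IsTreeOn n y.1.1 y.2.1 ∧
        (∀ j ∈ y.1.1, j ≠ y.2.1.1 → ∃ k : ℕ, y.1.2^[k] (y.2.2 j) = y.2.1.2 j) ∧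
        ∀ j, j ∉ y.1.1.erase y.2.1.1 → y.2.2 j = j}) :
    {x : (Fin n × (Fin n → Fin n)) × Finset (Fin n) //
            IsTreeOn n Finset.univ x.1 ∧ x.1.1 ∈ x.2} :=
  ⟨((y.val.2.1.1,
     fun j => if j ∈ y.val.1.1.erase y.val.2.1.1 then y.val.2.2 j else y.val.1.2 j),
    y.val.1.1),
   backward_ok y.val.1.1 y.val.1.2 y.val.2.1.1 y.val.2.1.2 y.val.2.2
     y.prop.1 y.prop.2.1 y.prop.2.2.1,
   y.prop.2.1.1⟩


/-- Bijection between pairs `(T, F)` — a rooted tree `T` on `Fin n` together with a subforest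
`F` given by a set `R` of roots containing the root of `T` (cut the edges leaving `R`) — and
triples `(F, T̂, φ)` of a forest `F` on `Fin n` with root set `R`, a quotient rooted tree `T̂`
on the blocks of `F` (identified with their roots, so `T̂` is a tree on `R` rooted at the root
of `T`), and a function `φ` on the non-root blocks with `φ(B)` a vertex of the block `T̂(B)`
(i.e. `φ j` reaches the root `T̂ j` in the forest).  The bijection cuts `T` along `R`,
projects the parent of each `j ∈ R ∖ {r}` to the root of its block (by iterating the forest
parent), and records the actual attachment vertex `φ j = T(j)`. -/
theorem stmt16 (n : ℕ) :
    ∃ e : {x : (Fin n × (Fin n → Fin n)) × Finset (Fin n) //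
            IsTreeOn n Finset.univ x.1 ∧ x.1.1 ∈ x.2}
          ≃ {y : (Finset (Fin n) × (Fin n → Fin n)) ×
                  (Fin n × (Fin n → Fin n)) × (Fin n → Fin n) //
            IsForestOn n Finset.univ y.1.1 y.1.2 ∧ IsTreeOn n y.1.1 y.2.1 ∧
              (∀ j ∈ y.1.1, j ≠ y.2.1.1 → ∃ k : ℕ, y.1.2^[k] (y.2.2 j) = y.2.1.2 j) ∧
              ∀ j, j ∉ y.1.1.erase y.2.1.1 → y.2.2 j = j},
      ∀ x, (e x).val =
        ((x.val.2, restrictFun n x.val.1.2 x.val.2ᶜ),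
         (x.val.1.1,
          restrictFun n
            (fun j => (restrictFun n x.val.1.2 x.val.2ᶜ)^[n] (x.val.1.2 j))
            (x.val.2.erase x.val.1.1)),
         restrictFun n x.val.1.2 (x.val.2.erase x.val.1.1)) := by
  classical
  refine ⟨⟨fwd, bwd, ?_, ?_⟩, fun x => rfl⟩
  · -- left inverse
    rintro ⟨⟨⟨r, p⟩, R⟩, hT, hrR⟩
    apply Subtype.ext
    have hpr : p r = r := hT.2.1 r (by simp)
    have hp' : (fun j => if j ∈ R.erase r then restrictFun n p (R.erase r) j
        else restrictFun n p Rᶜ j) = p := by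
      funext j
      by_cases hje : j ∈ R.erase r
      · simp [restrictFun, hje]
      · by_cases hjR : j ∈ R
        · have hjr : j = r := by
            by_contra hne
            exact hje (Finset.mem_erase.mpr ⟨hne, hjR⟩)
          subst hjr
          simp [restrictFun, hje, hjR, hpr]
        · simp [restrictFun, hje, hjR]
    show (((r, fun j => if j ∈ R.erase r then restrictFun n p (R.erase r) j
        else restrictFun n p Rᶜ j), R) :
        (Fin n × (Fin n → Fin n)) × Finset (Fin n)) = ((r, p), R)
    rw [hp']
  · -- right inverse
    rintro ⟨⟨⟨R, q⟩, ⟨r, phat⟩, φ⟩, hF, hThat, hφ, hφ0⟩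
    apply Subtype.ext
    simp only at hφ hφ0
    set p : Fin n → Fin n := fun j => if j ∈ R.erase r then φ j else q j with hp
    have hqR : ∀ j ∈ R, q j = j := fun j hj => hF.2.1 j (by simp [hj])
    have hq' : restrictFun n p Rᶜ = q := by
      funext i
      by_cases hiR : i ∈ R
      · have h1 : i ∉ Rᶜ := by simp [hiR]
        show (if i ∈ Rᶜ then p i else i) = q i
        rw [if_neg h1, hqR i hiR]
      · have h2 : i ∉ R.erase r := fun h => hiR (Finset.mem_of_mem_erase h)
        have h1 : i ∈ Rᶜ := by simp [hiR]
        show (if i ∈ Rᶜ then p i else i) = q i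
        rw [if_pos h1, hp]
        exact if_neg h2
    have hφ' : restrictFun n p (R.erase r) = φ := by
      funext j
      by_cases hje : j ∈ R.erase r
      · show (if j ∈ R.erase r then p j else j) = φ j
        rw [if_pos hje, hp]
        exact if_pos hje
      · show (if j ∈ R.erase r then p j else j) = φ j
        rw [if_neg hje, hφ0 j hje]
    have hphat' : restrictFun n (fun j => (restrictFun n p Rᶜ)^[n] (p j)) (R.erase r)
        = phat := by
      rw [hq']
      funext j
      by_cases hje : j ∈ R.erase r
      · obtain ⟨hjr, hjR⟩ := Finset.mem_erase.mp hje
        obtain ⟨k, hk⟩ := hφ j hjR hjr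
        have hpj : p j = φ j := if_pos hje
        have hmem : q^[k] (φ j) ∈ R := by rw [hk]; exact hThat.2.2.1 j hjR
        have hqn : q^[n] (φ j) = q^[k] (φ j) := (hitN hqR ⟨k, hmem⟩).2 k hmem
        show (if j ∈ R.erase r then q^[n] (p j) else j) = phat j
        rw [if_pos hje, hpj, hqn, hk]
      · show (if j ∈ R.erase r then q^[n] (p j) else j) = phat j
        rw [if_neg hje]
        exact (hThat.2.1 j hje).symm
    show ((R, restrictFun n p Rᶜ),
          (r, restrictFun n (fun j => (restrictFun n p Rᶜ)^[n] (p j)) (R.erase r)),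
          restrictFun n p (R.erase r)) = ((R, q), (r, phat), φ)
    rw [hphat', hq', hφ']
end
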